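/- arXiv:1212.2247 — 9 statements merged into one kernel-verified Lean document; each statement's English description precedes it below -/
import Mathlib

section
/- Let f: Ω → ℝ be a measurable function that is tempered with respect to σ. Then for every ε > 0 there exists a measurable function g: Ω → (0,∞) such that for ℙ-a.e. ω ∈ Ω and every n ∈ ℤ, |f(σⁿω)| ≤ g(ω) e^{ε|n|}. -/
open MeasureTheory Filter

/-- A function `f : Ω → ℝ` is *tempered* with respect to the invertible
transformation `σ` if for `ℙ`-a.e. `ω`, `(1/|n|) * log |f(σⁿ ω)| → 0` as `n → ±∞`. -/
def Tempered {Ω : Type*} [MeasurableSpace Ω] (ℙ : Measure Ω) (σ : Equiv.Perm Ω)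
    (f : Ω → ℝ) : Prop :=
  ∀ᵐ ω ∂ℙ, Tendsto (fun n : ℤ => (1 / |(n : ℝ)|) * Real.log |f ((σ ^ n) ω)|)
    cofinite (nhds 0)

/-!
Temperedness says that `log |f (σⁿ ω)| < ε |n|` for all but finitely many `n`, so the weighted
orbit `|f (σⁿ ω)| e^{-ε|n|}` is bounded for a.e. `ω`. One plus its supremum over `n ∈ ℤ` is the
required `g`; it is measurable as a countable supremum of measurable functions.
-/

theorem Equiv.Perm.measurable_zpow {α : Type*} [MeasurableSpace α] {σ : Equiv.Perm α}
    (hσ : Measurable σ) (hσinv : Measurable σ.symm) (n : ℤ) : Measurable ⇑(σ ^ n) := by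
  induction n using Int.induction_on with
  | zero => exact measurable_id
  | succ k ih => simpa only [zpow_add_one, Equiv.Perm.coe_mul] using ih.comp hσ
  | pred k ih => simpa only [zpow_sub_one, Equiv.Perm.coe_mul, Equiv.Perm.inv_def] using ih.comp hσinv

section TemperedSequence

variable {u : ℤ → ℝ} {ε : ℝ}

theorem eventually_abs_le_exp_of_tendsto_log_div
    (hu : Tendsto (fun n : ℤ => (1 / |(n : ℝ)|) * Real.log |u n|) cofinite (nhds 0))
    (hε : 0 < ε) : ∀ᶠ n in cofinite, |u n| ≤ Real.exp (ε * |(n : ℝ)|) := by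
  filter_upwards [hu.eventually (eventually_lt_nhds hε), eventually_cofinite_ne 0]
    with n hlt hn
  have hpos : (0 : ℝ) < |(n : ℝ)| := abs_pos.mpr (Int.cast_ne_zero.mpr hn)
  rw [one_div_mul_eq_div, div_lt_iff₀ hpos] at hlt
  exact (Real.le_exp_log _).trans (Real.exp_le_exp.mpr hlt.le)

theorem bddAbove_range_abs_mul_exp_neg_of_tendsto_log_div
    (hu : Tendsto (fun n : ℤ => (1 / |(n : ℝ)|) * Real.log |u n|) cofinite (nhds 0))
    (hε : 0 < ε) :
    BddAbove (Set.range fun n : ℤ => |u n| * Real.exp (-(ε * |(n : ℝ)|))) := by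
  refine IsBoundedUnder.bddAbove_range_of_cofinite ⟨1, eventually_map.mpr ?_⟩
  filter_upwards [eventually_abs_le_exp_of_tendsto_log_div hu hε] with n hn
  rwa [Real.exp_neg, ← div_eq_mul_inv, div_le_one (Real.exp_pos _)]

end TemperedSequence

theorem stmt0_general {Ω : Type*} [MeasurableSpace Ω] (ℙ : Measure Ω)
    (σ : Equiv.Perm Ω) (hσ : Measurable (⇑σ)) (hσinv : Measurable (⇑σ.symm))
    (f : Ω → ℝ) (hf : Measurable f) (htemp : Tempered ℙ σ f) :
    ∀ ε : ℝ, 0 < ε → ∃ g : Ω → ℝ, Measurable g ∧ (∀ ω, 0 < g ω) ∧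
      ∀ᵐ ω ∂ℙ, ∀ n : ℤ, |f ((σ ^ n) ω)| ≤ g ω * Real.exp (ε * |(n : ℝ)|) := by
  intro ε hε
  set w : Ω → ℤ → ℝ := fun ω n => |f ((σ ^ n) ω)| * Real.exp (-(ε * |(n : ℝ)|))
  have hw_meas (n : ℤ) : Measurable fun ω => w ω n :=
    (hf.comp (σ.measurable_zpow hσ hσinv n)).abs.mul_const _
  refine ⟨fun ω => 1 + ⨆ n, w ω n, measurable_const.add (Measurable.iSup hw_meas),
    fun ω => add_pos_of_pos_of_nonneg one_pos (Real.iSup_nonneg fun n => by positivity), ?_⟩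
  filter_upwards [htemp] with ω hω n
  have hle : w ω n ≤ ⨆ m, w ω m :=
    le_ciSup (bddAbove_range_abs_mul_exp_neg_of_tendsto_log_div hω hε) n
  calc |f ((σ ^ n) ω)| = w ω n * Real.exp (ε * |(n : ℝ)|) := by
        rw [mul_assoc, ← Real.exp_add, neg_add_cancel, Real.exp_zero, mul_one]
    _ ≤ (1 + ⨆ m, w ω m) * Real.exp (ε * |(n : ℝ)|) := by gcongr; linarith

/-- If `f` is measurable and tempered with respect to the invertible,
ergodic, measure-preserving transformation `σ`, then for every `ε > 0` there is a
measurable positive function `g` such that for a.e. `ω` and every `n : ℤ`,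
`|f(σⁿ ω)| ≤ g ω * exp (ε |n|)`. -/
theorem stmt0 {Ω : Type*} [MeasurableSpace Ω] (ℙ : Measure Ω) [IsProbabilityMeasure ℙ]
    (σ : Equiv.Perm Ω) (hσ : Measurable (⇑σ)) (hσinv : Measurable (⇑σ.symm))
    (herg : Ergodic (⇑σ) ℙ)
    (f : Ω → ℝ) (hf : Measurable f) (htemp : Tempered ℙ σ f) :
    ∀ ε : ℝ, 0 < ε → ∃ g : Ω → ℝ, Measurable g ∧ (∀ ω, 0 < g ω) ∧
      ∀ᵐ ω ∂ℙ, ∀ n : ℤ, |f ((σ ^ n) ω)| ≤ g ω * Real.exp (ε * |(n : ℝ)|) :=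
  stmt0_general ℙ σ hσ hσinv f hf htemp
end

section
/- Let ε > 0, let f: Ω → ℝ and g: Ω → (0,∞) be measurable, and suppose that for ℙ-a.e. ω ∈ Ω and every n ∈ ℤ, |f(σⁿω)| ≤ g(ω) e^{ε|n|}. Define g̃(ω) := inf_{m∈ℤ} g(σᵐω) e^{ε|m|}. Then g̃ is measurable, g̃ ≤ g, for ℙ-a.e. ω and every n ∈ ℤ one still has |f(σⁿω)| ≤ g̃(ω) e^{ε|n|}, and for every ω and every m ∈ ℤ, e^{−ε|m|} g̃(ω) ≤ g̃(σᵐω) ≤ e^{ε|m|} g̃(ω); consequently, for every ω with 0 < g̃(ω) < ∞, limsup_{n→±∞} (1/|n|) |log g̃(σⁿω)| ≤ ε. -/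
/-!
Reindexing the infimum defining `g̃(σᵐω)` by `k ↦ k + m` and using `|k + m| ≤ |k| + |m|` shows
that `g̃` changes by at most a factor `e^{ε|m|}` along orbits; taking logarithms gives
`|log g̃(σⁿω)| ≤ ε|n| + |log g̃(ω)|`, hence the growth rate `ε`. The same triangle inequality
transfers the domination of `f` from each `g(σᵐω)` to `g̃(ω)`; the hypothesis holds a.e.
simultaneously at all points of the orbit because every `σᵐ` preserves `ℙ`.
-/

open MeasureTheory Filter

open Real

namespace Equiv.Perm

variable {α : Type*}

lemma coe_zpow_eq_iterate (σ : Perm α) (m : ℤ) :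
    ∃ n : ℕ, ⇑(σ ^ m) = (⇑σ)^[n] ∨ ⇑(σ ^ m) = (⇑σ.symm)^[n] := by
  cases m with
  | ofNat n => exact ⟨n, .inl (coe_pow σ n)⟩
  | negSucc n => exact ⟨n + 1, .inr (by rw [zpow_negSucc, ← inv_pow, coe_pow]; rfl)⟩

variable [MeasurableSpace α] {σ : Perm α}

lemma measurable_zpow_s1 (hσ : Measurable σ) (hσ' : Measurable σ.symm) (m : ℤ) :
    Measurable ⇑(σ ^ m) := by
  obtain ⟨n, h | h⟩ := σ.coe_zpow_eq_iterate m <;> rw [h]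
  exacts [hσ.iterate n, hσ'.iterate n]

lemma measurePreserving_zpow {μ : Measure α} (hσ : MeasurePreserving σ μ μ)
    (hσ' : Measurable σ.symm) (m : ℤ) : MeasurePreserving ⇑(σ ^ m) μ μ := by
  let e : α ≃ᵐ α := ⟨σ, hσ.measurable, hσ'⟩
  obtain ⟨n, h | h⟩ := σ.coe_zpow_eq_iterate m <;> rw [h]
  exacts [hσ.iterate n, (hσ.symm e).iterate n]

lemma ae_forall_zpow_apply {μ : Measure α} (hσ : MeasurePreserving σ μ μ)
    (hσ' : Measurable σ.symm) {p : α → Prop} (hp : ∀ᵐ x ∂μ, p x) :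
    ∀ᵐ x ∂μ, ∀ m : ℤ, p ((σ ^ m) x) :=
  ae_all_iff.2 fun m => (measurePreserving_zpow hσ hσ' m).quasiMeasurePreserving.ae hp

end Equiv.Perm

lemma exp_mul_abs_add_le {ε : ℝ} (hε : 0 ≤ ε) (a b : ℝ) :
    exp (ε * |a + b|) ≤ exp (ε * |a|) * exp (ε * |b|) := by
  rw [← exp_add, ← mul_add]
  exact exp_le_exp.2 (mul_le_mul_of_nonneg_left (abs_add_le a b) hε)

lemma abs_log_le_of_exp_neg_mul_le {x y a : ℝ} (hx : 0 < x) (hlo : exp (-a) * x ≤ y)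
    (hhi : y ≤ exp a * x) : |log y| ≤ a + |log x| := by
  have hy : 0 < y := (by positivity : 0 < exp (-a) * x).trans_le hlo
  have hlog_lo := log_le_log (by positivity) hlo
  have hlog_hi := log_le_log hy hhi
  rw [log_mul (exp_ne_zero _) hx.ne', log_exp] at hlog_lo hlog_hi
  rw [abs_le]
  constructor <;> linarith [neg_abs_le (log x), le_abs_self (log x)]

lemma limsup_one_div_abs_mul_abs_le {a : ℤ → ℝ} {ε C : ℝ}
    (h : ∀ n, |a n| ≤ ε * |(n : ℝ)| + C) :
    limsup (fun n : ℤ => (1 / |(n : ℝ)|) * |a n|) cofinite ≤ ε := by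
  have habs : Tendsto (fun n : ℤ => |(n : ℝ)|) cofinite atTop :=
    tendsto_norm_comp_cofinite_atTop_of_isClosedEmbedding Int.isClosedEmbedding_coe_real
  have hbound : Tendsto (fun n : ℤ => ε + C * (1 / |(n : ℝ)|)) cofinite (nhds ε) := by
    simpa using tendsto_const_nhds.add (habs.inv_tendsto_atTop.const_mul C)
  have hle : (fun n : ℤ => (1 / |(n : ℝ)|) * |a n|) ≤ᶠ[cofinite]
      fun n => ε + C * (1 / |(n : ℝ)|) := by
    filter_upwards [habs.eventually_gt_atTop 0] with n hn
    calc (1 / |(n : ℝ)|) * |a n| ≤ (1 / |(n : ℝ)|) * (ε * |(n : ℝ)| + C) := by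
          gcongr; exact h n
      _ = ε + C * (1 / |(n : ℝ)|) := by field_simp
  calc limsup (fun n : ℤ => (1 / |(n : ℝ)|) * |a n|) cofinite
      ≤ limsup (fun n : ℤ => ε + C * (1 / |(n : ℝ)|)) cofinite :=
        limsup_le_limsup hle (isCoboundedUnder_le_of_le _ fun n => by positivity)
          hbound.isBoundedUnder_le
    _ = ε := hbound.limsup_eq

noncomputable def orbitInf {Ω : Type*} (σ : Equiv.Perm Ω) (ε : ℝ) (g : Ω → ℝ) (ω : Ω) : ℝ :=
  ⨅ m : ℤ, g ((σ ^ m) ω) * exp (ε * |(m : ℝ)|)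

section orbitInf

variable {Ω : Type*} {σ : Equiv.Perm Ω} {ε : ℝ} {g : Ω → ℝ}

lemma le_orbitInf {ω : Ω} {c : ℝ} (h : ∀ m : ℤ, c ≤ g ((σ ^ m) ω) * exp (ε * |(m : ℝ)|)) :
    c ≤ orbitInf σ ε g ω :=
  le_ciInf h

lemma orbitInf_le (hg : ∀ ω, 0 ≤ g ω) (ω : Ω) (m : ℤ) :
    orbitInf σ ε g ω ≤ g ((σ ^ m) ω) * exp (ε * |(m : ℝ)|) :=
  ciInf_le ⟨0, by rintro _ ⟨k, rfl⟩; exact mul_nonneg (hg _) (exp_pos _).le⟩ m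

lemma orbitInf_le_self (hg : ∀ ω, 0 ≤ g ω) (ω : Ω) : orbitInf σ ε g ω ≤ g ω := by
  simpa using orbitInf_le (σ := σ) (ε := ε) hg ω 0

lemma measurable_orbitInf [MeasurableSpace Ω] (hσ : Measurable σ) (hσ' : Measurable σ.symm)
    (hg : Measurable g) : Measurable (orbitInf σ ε g) :=
  Measurable.iInf fun m => (hg.comp (Equiv.Perm.measurable_zpow_s1 hσ hσ' m)).mul_const _

lemma exp_neg_mul_orbitInf_le (hε : 0 ≤ ε) (hg : ∀ ω, 0 ≤ g ω) (ω : Ω) (m : ℤ) :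
    exp (-(ε * |(m : ℝ)|)) * orbitInf σ ε g ω ≤ orbitInf σ ε g ((σ ^ m) ω) := by
  refine le_orbitInf fun k => ?_
  have hk : orbitInf σ ε g ω ≤
      g ((σ ^ k) ((σ ^ m) ω)) * (exp (ε * |(k : ℝ)|) * exp (ε * |(m : ℝ)|)) :=
    calc orbitInf σ ε g ω ≤ g ((σ ^ (k + m)) ω) * exp (ε * |((k + m : ℤ) : ℝ)|) :=
          orbitInf_le hg ω (k + m)
      _ ≤ g ((σ ^ k) ((σ ^ m) ω)) * (exp (ε * |(k : ℝ)|) * exp (ε * |(m : ℝ)|)) := by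
          rw [zpow_add, Equiv.Perm.mul_apply, Int.cast_add]
          gcongr
          exacts [hg _, exp_mul_abs_add_le hε _ _]
  calc exp (-(ε * |(m : ℝ)|)) * orbitInf σ ε g ω
      ≤ exp (-(ε * |(m : ℝ)|)) *
          (g ((σ ^ k) ((σ ^ m) ω)) * (exp (ε * |(k : ℝ)|) * exp (ε * |(m : ℝ)|))) := by
        gcongr
    _ = g ((σ ^ k) ((σ ^ m) ω)) * exp (ε * |(k : ℝ)|) := by
        rw [exp_neg]; field_simp

lemma orbitInf_zpow_apply_le (hε : 0 ≤ ε) (hg : ∀ ω, 0 ≤ g ω) (ω : Ω) (m : ℤ) :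
    orbitInf σ ε g ((σ ^ m) ω) ≤ exp (ε * |(m : ℝ)|) * orbitInf σ ε g ω := by
  have h := exp_neg_mul_orbitInf_le (σ := σ) hε hg ((σ ^ m) ω) (-m)
  rwa [← Equiv.Perm.mul_apply, ← zpow_add, neg_add_cancel, zpow_zero, Equiv.Perm.one_apply,
    Int.cast_neg, abs_neg, exp_neg, inv_mul_le_iff₀ (exp_pos _)] at h

lemma abs_le_orbitInf_mul_exp {f : Ω → ℝ} (hε : 0 ≤ ε) (hg : ∀ ω, 0 ≤ g ω) {ω : Ω}
    (h : ∀ m n : ℤ, |f ((σ ^ n) ((σ ^ m) ω))| ≤ g ((σ ^ m) ω) * exp (ε * |(n : ℝ)|))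
    (n : ℤ) : |f ((σ ^ n) ω)| ≤ orbitInf σ ε g ω * exp (ε * |(n : ℝ)|) := by
  rw [← div_le_iff₀ (exp_pos _)]
  refine le_orbitInf fun m => ?_
  rw [div_le_iff₀ (exp_pos _)]
  calc |f ((σ ^ n) ω)| = |f ((σ ^ (n - m)) ((σ ^ m) ω))| := by
        rw [← Equiv.Perm.mul_apply, ← zpow_add, sub_add_cancel]
    _ ≤ g ((σ ^ m) ω) * exp (ε * |((n - m : ℤ) : ℝ)|) := h m (n - m)
    _ ≤ g ((σ ^ m) ω) * (exp (ε * |(m : ℝ)|) * exp (ε * |(n : ℝ)|)) := by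
        rw [Int.cast_sub, sub_eq_neg_add, ← abs_neg (m : ℝ)]
        gcongr
        exacts [hg _, exp_mul_abs_add_le hε _ _]
    _ = g ((σ ^ m) ω) * exp (ε * |(m : ℝ)|) * exp (ε * |(n : ℝ)|) := by ring

end orbitInf

theorem stmt1_general {Ω : Type*} [MeasurableSpace Ω] (ℙ : Measure Ω)
    (σ : Equiv.Perm Ω) (hσinv : Measurable (⇑σ.symm))
    (herg : Ergodic (⇑σ) ℙ)
    (ε : ℝ) (hε : 0 < ε)
    (f g : Ω → ℝ) (hg : Measurable g) (hgpos : ∀ ω, 0 < g ω)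
    (hbd : ∀ᵐ ω ∂ℙ, ∀ n : ℤ, |f ((σ ^ n) ω)| ≤ g ω * Real.exp (ε * |(n : ℝ)|))
    (gt : Ω → ℝ)
    (hgt : gt = fun ω => ⨅ m : ℤ, g ((σ ^ m) ω) * Real.exp (ε * |(m : ℝ)|)) :
    Measurable gt ∧
    (∀ ω, gt ω ≤ g ω) ∧
    (∀ᵐ ω ∂ℙ, ∀ n : ℤ, |f ((σ ^ n) ω)| ≤ gt ω * Real.exp (ε * |(n : ℝ)|)) ∧
    (∀ ω, ∀ m : ℤ, Real.exp (-(ε * |(m : ℝ)|)) * gt ω ≤ gt ((σ ^ m) ω) ∧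
        gt ((σ ^ m) ω) ≤ Real.exp (ε * |(m : ℝ)|) * gt ω) ∧
    (∀ ω, 0 < gt ω →
      Filter.limsup (fun n : ℤ => (1 / |(n : ℝ)|) * |Real.log (gt ((σ ^ n) ω))|)
        cofinite ≤ ε) := by
  obtain rfl : gt = orbitInf σ ε g := hgt
  have hg₀ : ∀ ω, 0 ≤ g ω := fun ω => (hgpos ω).le
  have hlower := exp_neg_mul_orbitInf_le (σ := σ) hε.le hg₀
  have hupper := orbitInf_zpow_apply_le (σ := σ) hε.le hg₀
  refine ⟨measurable_orbitInf herg.measurable hσinv hg, orbitInf_le_self hg₀, ?_,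
    fun ω m => ⟨hlower ω m, hupper ω m⟩, fun ω hω => ?_⟩
  · filter_upwards [Equiv.Perm.ae_forall_zpow_apply herg.toMeasurePreserving hσinv hbd] with ω hω n
    exact abs_le_orbitInf_mul_exp hε.le hg₀ hω n
  · exact limsup_one_div_abs_mul_abs_le fun n =>
      abs_log_le_of_exp_neg_mul_le hω (hlower ω n) (hupper ω n)

/-- Given `ε > 0` and a measurable positive `g` dominating `f` along
orbits, the function `g̃(ω) = inf_{m ∈ ℤ} g(σᵐ ω) e^{ε|m|}` is measurable, `g̃ ≤ g`,
it still dominates `f` along orbits a.e., it varies sub-exponentially along orbits, and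
consequently its logarithm grows at rate at most `ε`. -/
theorem stmt1 {Ω : Type*} [MeasurableSpace Ω] (ℙ : Measure Ω) [IsProbabilityMeasure ℙ]
    (σ : Equiv.Perm Ω) (hσ : Measurable (⇑σ)) (hσinv : Measurable (⇑σ.symm))
    (herg : Ergodic (⇑σ) ℙ)
    (ε : ℝ) (hε : 0 < ε)
    (f g : Ω → ℝ) (hf : Measurable f) (hg : Measurable g) (hgpos : ∀ ω, 0 < g ω)
    (hbd : ∀ᵐ ω ∂ℙ, ∀ n : ℤ, |f ((σ ^ n) ω)| ≤ g ω * Real.exp (ε * |(n : ℝ)|))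
    (gt : Ω → ℝ)
    (hgt : gt = fun ω => ⨅ m : ℤ, g ((σ ^ m) ω) * Real.exp (ε * |(m : ℝ)|)) :
    Measurable gt ∧
    (∀ ω, gt ω ≤ g ω) ∧
    (∀ᵐ ω ∂ℙ, ∀ n : ℤ, |f ((σ ^ n) ω)| ≤ gt ω * Real.exp (ε * |(n : ℝ)|)) ∧
    (∀ ω, ∀ m : ℤ, Real.exp (-(ε * |(m : ℝ)|)) * gt ω ≤ gt ((σ ^ m) ω) ∧
        gt ((σ ^ m) ω) ≤ Real.exp (ε * |(m : ℝ)|) * gt ω) ∧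
    (∀ ω, 0 < gt ω →
      Filter.limsup (fun n : ℤ => (1 / |(n : ℝ)|) * |Real.log (gt ((σ ^ n) ω))|)
        cofinite ≤ ε) :=
  stmt1_general ℙ σ hσinv herg ε hε f g hg hgpos hbd gt hgt
end

section
/- Let σ be an invertible, ergodic, measure-preserving transformation of a probability space (Ω, 𝓕, ℙ), let α: Ω → (0,∞) be measurable with log α ∈ L¹(ℙ), let κ := ∫ log α dℙ, and let ε > 0. Then there exists a measurable function A: Ω → (0,∞), tempered with respect to σ, such that for ℙ-a.e. ω and every integer l ≥ 0, ∏_{i=1}^{l} α(σ^{−i}ω) ≤ A(ω) e^{(κ+ε) l}. -/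
open MeasureTheory Filter

open Set Topology

/-!
Put `g = log α ∘ σ⁻¹ - (κ + ε)`, so that `∏_{i=1}^{l} α(σ^{-i} ω) = exp (S_l ω + (κ + ε) l)`
where `S_l` are the Birkhoff sums of `g` along `σ⁻¹`. Since `∫ g = -ε < 0`, Hopf's maximal
ergodic inequality shows that the `S_l` are a.e. bounded above, and `A = exp B` with
`B = sup_l S_l` works. Temperedness: `B = max 0 (g + B ∘ σ⁻¹)`, so the increment `B ∘ σ⁻¹ - B`
is dominated by `|g|`. By Birkhoff's theorem (which follows from the same boundedness
statement) `B (σⁿ ω) / n` converges a.e. to a constant, and the constant is `0` because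
`B ∘ σⁿ / n` has the law of `B / n`, which tends to `0` in measure.
-/

section BirkhoffSums

variable {Ω : Type*} {T : Ω → Ω} {g : Ω → ℝ}

theorem birkhoffSum_apply_sub_self {G : Type*} [AddCommGroup G] (f : Ω → G) (n : ℕ) (x : Ω) :
    birkhoffSum T (fun y => f (T y) - f y) n x = f (T^[n] x) - f x := by
  induction n with
  | zero => simp
  | succ n ih =>
    rw [birkhoffSum_succ, ih, Function.iterate_succ_apply']
    abel

theorem birkhoffSum_sub_const (c : ℝ) (n : ℕ) (x : Ω) :
    birkhoffSum T (fun y => g y - c) n x = birkhoffSum T g n x - n * c := by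
  simp [birkhoffSum, Finset.sum_sub_distrib]

noncomputable def birkhoffMax (T : Ω → Ω) (g : Ω → ℝ) : ℕ → Ω → ℝ
  | 0 => 0
  | n + 1 => fun x => max (birkhoffMax T g n x) (birkhoffSum T g (n + 1) x)

theorem birkhoffMax_le_iff {n : ℕ} {x : Ω} {c : ℝ} :
    birkhoffMax T g n x ≤ c ↔ ∀ k ≤ n, birkhoffSum T g k x ≤ c := by
  induction n with
  | zero => simp [birkhoffMax]
  | succ n ih =>
    simp only [birkhoffMax, max_le_iff, ih, Nat.le_succ_iff, or_imp, forall_and,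
      forall_eq]

theorem birkhoffSum_le_birkhoffMax {k n : ℕ} (hkn : k ≤ n) (x : Ω) :
    birkhoffSum T g k x ≤ birkhoffMax T g n x :=
  birkhoffMax_le_iff.1 le_rfl k hkn

theorem birkhoffMax_nonneg (n : ℕ) (x : Ω) : 0 ≤ birkhoffMax T g n x := by
  simpa using birkhoffSum_le_birkhoffMax (T := T) (g := g) n.zero_le x

theorem birkhoffMax_mono (x : Ω) : Monotone fun n => birkhoffMax T g n x :=
  monotone_nat_of_le_succ fun _ => le_max_left _ _

theorem birkhoffMax_le_max_zero_add (n : ℕ) (x : Ω) :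
    birkhoffMax T g n x ≤ max 0 (g x + birkhoffMax T g n (T x)) := by
  refine birkhoffMax_le_iff.2 fun k hk => ?_
  cases k with
  | zero => simp
  | succ k =>
    rw [birkhoffSum_succ']
    exact le_max_of_le_right (by gcongr; exact birkhoffSum_le_birkhoffMax (by omega) _)

theorem bddAbove_birkhoffSum_apply_iff {x : Ω} :
    BddAbove (range fun n => birkhoffSum T g n (T x)) ↔
      BddAbove (range fun n => birkhoffSum T g n x) := by
  simp only [bddAbove_def, forall_mem_range]
  constructor
  · rintro ⟨C, hC⟩
    refine ⟨max 0 (g x + C), fun n => ?_⟩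
    cases n with
    | zero => simp
    | succ n => exact le_max_of_le_right (by rw [birkhoffSum_succ']; linarith [hC n])
  · rintro ⟨C, hC⟩
    exact ⟨C - g x, fun n => by linarith [hC (n + 1), birkhoffSum_succ' T g n x]⟩

/-- Where the Birkhoff sums are unbounded above this is `0`, by the convention for `⨆` on `ℝ`. -/
noncomputable def birkhoffSup (T : Ω → Ω) (g : Ω → ℝ) (x : Ω) : ℝ :=
  ⨆ n : ℕ, birkhoffSum T g n x

theorem birkhoffSum_le_birkhoffSup {x : Ω} (hx : BddAbove (range fun n => birkhoffSum T g n x))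
    (n : ℕ) : birkhoffSum T g n x ≤ birkhoffSup T g x :=
  le_ciSup hx n

theorem birkhoffSup_nonneg (x : Ω) : 0 ≤ birkhoffSup T g x := by
  by_cases hx : BddAbove (range fun n => birkhoffSum T g n x)
  · simpa using birkhoffSum_le_birkhoffSup hx 0
  · simp [birkhoffSup, Real.iSup_of_not_bddAbove hx]

theorem birkhoffSup_eq_max {x : Ω} (hx : BddAbove (range fun n => birkhoffSum T g n x)) :
    birkhoffSup T g x = max 0 (g x + birkhoffSup T g (T x)) := by
  have hTx := bddAbove_birkhoffSum_apply_iff.2 hx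
  refine le_antisymm (ciSup_le fun n => ?_) (max_le (birkhoffSup_nonneg x) ?_)
  · cases n with
    | zero => simp
    | succ n =>
      rw [birkhoffSum_succ']
      exact le_max_of_le_right (by gcongr; exact birkhoffSum_le_birkhoffSup hTx n)
  · rw [← le_sub_iff_add_le']
    refine ciSup_le fun n => ?_
    rw [le_sub_iff_add_le', ← birkhoffSum_succ']
    exact birkhoffSum_le_birkhoffSup hx _

theorem abs_birkhoffSup_apply_sub_le {x : Ω} (hx : BddAbove (range fun n => birkhoffSum T g n x)) :
    |birkhoffSup T g (T x) - birkhoffSup T g x| ≤ |g x| := by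
  rw [birkhoffSup_eq_max hx, abs_sub_comm]
  simpa [max_comm, max_eq_left (birkhoffSup_nonneg (T x))] using
    abs_max_sub_max_le_abs (g x + birkhoffSup T g (T x)) (birkhoffSup T g (T x)) 0

end BirkhoffSums

theorem tendsto_div_of_abs_sub_le {u : ℕ → ℝ} {L : ℝ}
    (h : ∀ δ > 0, ∃ C, ∀ n : ℕ, |u n - n * L| ≤ n * δ + C) :
    Tendsto (fun n : ℕ => u n / n) atTop (𝓝 L) := by
  refine Metric.tendsto_nhds.2 fun ε hε => ?_
  obtain ⟨C, hC⟩ := h (ε / 2) (half_pos hε)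
  filter_upwards [(tendsto_const_div_atTop_nhds_zero_nat C).eventually (gt_mem_nhds (half_pos hε)),
    eventually_gt_atTop 0] with n hCn hn
  have hn' : (0 : ℝ) < n := Nat.cast_pos.2 hn
  rw [Real.dist_eq, show u n / n - L = (u n - n * L) / n by field_simp, abs_div,
    abs_of_pos hn', div_lt_iff₀ hn']
  rw [div_lt_iff₀ hn'] at hCn
  linarith [hC n]

section Ergodic

variable {Ω : Type*} [MeasurableSpace Ω] {μ : Measure Ω} {T : Ω → Ω} {g : Ω → ℝ}

theorem measurable_birkhoffSum (hT : Measurable T) (hg : Measurable g) (n : ℕ) :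
    Measurable (birkhoffSum T g n) :=
  Finset.measurable_sum _ fun i _ => hg.comp (hT.iterate i)

theorem integrable_birkhoffSum (hT : MeasurePreserving T μ μ) (hg : Integrable g μ) (n : ℕ) :
    Integrable (birkhoffSum T g n) μ :=
  integrable_finsetSum _ fun i _ => (hT.iterate i).integrable_comp_of_integrable hg

theorem measurable_birkhoffMax (hT : Measurable T) (hg : Measurable g) (n : ℕ) :
    Measurable (birkhoffMax T g n) := by
  induction n with
  | zero => exact measurable_const
  | succ n ih => exact ih.max (measurable_birkhoffSum hT hg _)

theorem integrable_birkhoffMax (hT : MeasurePreserving T μ μ) (hg : Integrable g μ) (n : ℕ) :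
    Integrable (birkhoffMax T g n) μ := by
  induction n with
  | zero => exact integrable_zero _ _ _
  | succ n ih => exact ih.sup (integrable_birkhoffSum hT hg _)

theorem setIntegral_nonneg_birkhoffMax_pos (hT : MeasurePreserving T μ μ) (hgm : Measurable g)
    (hg : Integrable g μ) (n : ℕ) : 0 ≤ ∫ x in {y | 0 < birkhoffMax T g n y}, g x ∂μ := by
  set M := birkhoffMax T g n
  have hP : MeasurableSet {y | 0 < M y} :=
    measurableSet_lt measurable_const (measurable_birkhoffMax hT.measurable hgm n)
  have hM : Integrable M μ := integrable_birkhoffMax hT hg n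
  have hMT : Integrable (fun x => M (T x)) μ := hT.integrable_comp_of_integrable hM
  -- on `{M > 0}` the maximum is attained at a positive time, so `M ≤ g + M ∘ T` there
  have hle : ∀ x, M x - M (T x) ≤ {y | 0 < M y}.indicator g x := by
    intro x
    by_cases hx : 0 < M x
    · rw [indicator_of_mem (show x ∈ {y | 0 < M y} from hx)]
      have := (le_max_iff.1 (birkhoffMax_le_max_zero_add n x)).resolve_left hx.not_ge
      linarith
    · rw [indicator_of_notMem (show x ∉ {y | 0 < M y} from hx)]
      linarith [birkhoffMax_nonneg (T := T) (g := g) n (T x)]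
  calc 0 = ∫ x, (M x - M (T x)) ∂μ := by
        rw [integral_sub hM hMT, ← integral_map hT.aemeasurable
          (hT.map_eq.symm ▸ hM.aestronglyMeasurable), hT.map_eq, sub_self]
    _ ≤ ∫ x, {y | 0 < M y}.indicator g x ∂μ := integral_mono (hM.sub hMT) (hg.indicator hP) hle
    _ = ∫ x in {y | 0 < M y}, g x ∂μ := integral_indicator hP

theorem measurable_birkhoffSup (hT : Measurable T) (hg : Measurable g) :
    Measurable (birkhoffSup T g) :=
  Measurable.iSup (measurable_birkhoffSum hT hg)

theorem Ergodic.ae_bddAbove_birkhoffSum (hT : Ergodic T μ) (hgm : Measurable g)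
    (hg : Integrable g μ) (hneg : ∫ x, g x ∂μ < 0) :
    ∀ᵐ x ∂μ, BddAbove (range fun n => birkhoffSum T g n x) := by
  have hE := measurableSet_bddAbove_range (measurable_birkhoffSum hT.measurable hgm)
  have hinv : T ⁻¹' {x | BddAbove (range fun n => birkhoffSum T g n x)} =
      {x | BddAbove (range fun n => birkhoffSum T g n x)} :=
    Set.ext fun _ => bddAbove_birkhoffSum_apply_iff
  refine (hT.ae_mem_or_ae_notMem hE hinv).resolve_right fun hunbdd => hneg.not_ge ?_
  set U := fun n => {y | 0 < birkhoffMax T g n y}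
  have hU : ⋃ n, U n =ᵐ[μ] (univ : Set Ω) := by
    refine eventuallyEq_univ.2 (hunbdd.mono fun x hx => ?_)
    obtain ⟨_, ⟨k, rfl⟩, hk⟩ := not_bddAbove_iff.1 hx 0
    exact mem_iUnion.2 ⟨k, hk.trans_le (birkhoffSum_le_birkhoffMax le_rfl x)⟩
  have hlim := tendsto_setIntegral_of_monotone (s := U)
    (fun n => measurableSet_lt measurable_const (measurable_birkhoffMax hT.measurable hgm n))
    (fun m n hmn x hx => hx.trans_le (birkhoffMax_mono x hmn)) hg.integrableOn
  rw [setIntegral_congr_set hU, setIntegral_univ] at hlim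
  exact ge_of_tendsto' hlim fun n => setIntegral_nonneg_birkhoffMax_pos hT.toMeasurePreserving hgm hg n

theorem Ergodic.integrable_birkhoffSup_apply_sub (hT : Ergodic T μ) (hgm : Measurable g)
    (hg : Integrable g μ) (hneg : ∫ x, g x ∂μ < 0) :
    Integrable (fun x => birkhoffSup T g (T x) - birkhoffSup T g x) μ := by
  have hB := measurable_birkhoffSup hT.measurable hgm
  refine hg.abs.mono' ((hB.comp hT.measurable).sub hB).aestronglyMeasurable ?_
  filter_upwards [hT.ae_bddAbove_birkhoffSum hgm hg hneg] with x hx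
  exact abs_birkhoffSup_apply_sub_le hx

theorem MeasureTheory.MeasurePreserving.eq_zero_of_ae_tendsto_comp_iterate_div {ν : Measure Ω}
    [IsFiniteMeasure ν] [NeZero ν] (hT : MeasurePreserving T ν ν) {f : Ω → ℝ} (hf : Measurable f)
    {c : ℝ} (h : ∀ᵐ x ∂ν, Tendsto (fun n : ℕ => f (T^[n] x) / n) atTop (𝓝 c)) : c = 0 := by
  have hc : TendstoInMeasure ν (fun (n : ℕ) x => f (T^[n] x) / n) atTop fun _ => c :=
    tendstoInMeasure_of_tendsto_ae
      (fun n => ((hf.comp (hT.measurable.iterate n)).div_const _).aestronglyMeasurable) h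
  have hf0 : TendstoInMeasure ν (fun (n : ℕ) x => f x / n) atTop 0 :=
    tendstoInMeasure_of_tendsto_ae (fun n => (hf.div_const _).aestronglyMeasurable)
      (ae_of_all _ fun x => tendsto_const_div_atTop_nhds_zero_nat (f x))
  -- `f ∘ T^[n]` and `f` have the same distribution
  have h0 : TendstoInMeasure ν (fun (n : ℕ) x => f (T^[n] x) / n) atTop 0 := by
    refine fun ε hε => (hf0 ε hε).congr fun n => ?_
    exact ((hT.iterate n).measure_preimage (measurableSet_le measurable_const
      ((hf.div_const _).edist measurable_const)).nullMeasurableSet).symm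
  exact (tendstoInMeasure_ae_unique hc h0).exists.choose_spec

variable [IsProbabilityMeasure μ]

theorem Ergodic.ae_exists_birkhoffSum_le (hT : Ergodic T μ) (hgm : Measurable g)
    (hg : Integrable g μ) {δ : ℝ} (hδ : 0 < δ) :
    ∀ᵐ x ∂μ, ∃ C, ∀ n : ℕ, birkhoffSum T g n x ≤ n * (∫ y, g y ∂μ + δ) + C := by
  have hneg : ∫ y, g y - (∫ y, g y ∂μ + δ) ∂μ < 0 := by
    rw [integral_sub hg (integrable_const _), integral_const]
    simpa using hδ
  filter_upwards [hT.ae_bddAbove_birkhoffSum (g := fun y => g y - (∫ y, g y ∂μ + δ))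
    (hgm.sub measurable_const) (hg.sub (integrable_const _)) hneg] with x ⟨C, hC⟩
  refine ⟨C, fun n => ?_⟩
  have := hC (mem_range_self n)
  rw [birkhoffSum_sub_const] at this
  linarith

theorem Ergodic.ae_exists_abs_birkhoffSum_sub_le (hT : Ergodic T μ) (hgm : Measurable g)
    (hg : Integrable g μ) {δ : ℝ} (hδ : 0 < δ) :
    ∀ᵐ x ∂μ, ∃ C, ∀ n : ℕ, |birkhoffSum T g n x - n * ∫ y, g y ∂μ| ≤ n * δ + C := by
  filter_upwards [hT.ae_exists_birkhoffSum_le hgm hg hδ,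
    hT.ae_exists_birkhoffSum_le hgm.neg hg.neg hδ] with x ⟨C₁, hC₁⟩ ⟨C₂, hC₂⟩
  refine ⟨max C₁ C₂, fun n => abs_le.2 ⟨?_, ?_⟩⟩
  · have := hC₂ n
    rw [birkhoffSum_neg, Pi.neg_def, integral_neg] at this
    linarith [le_max_right C₁ C₂]
  · linarith [hC₁ n, le_max_left C₁ C₂]

theorem Ergodic.ae_tendsto_birkhoffAverage (hT : Ergodic T μ) (hgm : Measurable g)
    (hg : Integrable g μ) :
    ∀ᵐ x ∂μ, Tendsto (birkhoffAverage ℝ T g · x) atTop (𝓝 (∫ y, g y ∂μ)) := by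
  have hbound := ae_all_iff.2 fun j : ℕ =>
    hT.ae_exists_abs_birkhoffSum_sub_le hgm hg (Nat.one_div_pos_of_nat (n := j))
  filter_upwards [hbound] with x hx
  refine (tendsto_div_of_abs_sub_le (u := (birkhoffSum T g · x)) fun δ hδ => ?_).congr fun n => ?_
  · obtain ⟨j, hj⟩ := exists_nat_one_div_lt hδ
    obtain ⟨C, hC⟩ := hx j
    exact ⟨C, fun n => (hC n).trans (by gcongr)⟩
  · simp [birkhoffAverage, div_eq_inv_mul]

theorem Ergodic.ae_tendsto_comp_iterate_div (hT : Ergodic T μ) {f : Ω → ℝ} (hf : Measurable f)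
    (hd : Integrable (fun x => f (T x) - f x) μ) :
    ∀ᵐ x ∂μ, Tendsto (fun n : ℕ => f (T^[n] x) / n) atTop (𝓝 0) := by
  have hlim : ∀ᵐ x ∂μ, Tendsto (fun n : ℕ => f (T^[n] x) / n) atTop
      (𝓝 (∫ y, f (T y) - f y ∂μ)) := by
    filter_upwards [hT.ae_tendsto_birkhoffAverage (g := fun y => f (T y) - f y)
      ((hf.comp hT.measurable).sub hf) hd] with x hx
    refine (add_zero (∫ y, f (T y) - f y ∂μ) ▸
      hx.add (tendsto_const_div_atTop_nhds_zero_nat (f x))).congr fun n => ?_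
    rw [birkhoffAverage, birkhoffSum_apply_sub_self, smul_eq_mul]
    field_simp
    ring
  rwa [hT.toMeasurePreserving.eq_zero_of_ae_tendsto_comp_iterate_div hf hlim] at hlim

end Ergodic

section Perm

variable {Ω : Type*} {σ : Equiv.Perm Ω}

theorem Equiv.Perm.zpow_natCast_apply (n : ℕ) (x : Ω) : (σ ^ (n : ℤ)) x = σ^[n] x := by
  rw [zpow_natCast, Equiv.Perm.iterate_eq_pow]

theorem Equiv.Perm.zpow_neg_natCast_apply (n : ℕ) (x : Ω) :
    (σ ^ (-(n : ℤ))) x = σ.symm^[n] x := by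
  rw [zpow_neg, zpow_natCast, ← inv_pow, Equiv.Perm.iterate_eq_pow, Equiv.Perm.inv_def]

theorem prod_Icc_zpow_neg_eq_exp {α : Ω → ℝ} (hα : ∀ ω, 0 < α ω) (c : ℝ) (l : ℕ) (ω : Ω) :
    ∏ i ∈ Finset.Icc 1 l, α ((σ ^ (-(i : ℤ))) ω) =
      Real.exp (birkhoffSum σ.symm (fun x => Real.log (α (σ.symm x)) - c) l ω + c * l) := by
  induction l with
  | zero => simp
  | succ l ih =>
    rw [Finset.prod_Icc_succ_top (by omega), ih, Equiv.Perm.zpow_neg_natCast_apply,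
      Function.iterate_succ_apply', birkhoffSum_succ, Nat.cast_succ,
      show ∀ a b d : ℝ, a + (b - c) + c * (d + 1) = a + c * d + b from fun _ _ _ => by ring,
      Real.exp_add _ (Real.log _), Real.exp_log (hα _)]

end Perm

section Tempered

variable {Ω : Type*} [MeasurableSpace Ω] {ℙ : Measure Ω} {σ : Equiv.Perm Ω}

theorem tempered_of_ae_tendsto {f : Ω → ℝ}
    (hfwd : ∀ᵐ ω ∂ℙ, Tendsto (fun n : ℕ => Real.log |f (σ^[n] ω)| / n) atTop (𝓝 0))
    (hbwd : ∀ᵐ ω ∂ℙ, Tendsto (fun n : ℕ => Real.log |f (σ.symm^[n] ω)| / n) atTop (𝓝 0)) :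
    Tempered ℙ σ f := by
  filter_upwards [hfwd, hbwd] with ω hpos hneg
  rw [Int.cofinite_eq, tendsto_sup, ← map_neg_atTop, ← Nat.map_cast_int_atTop, map_map,
    tendsto_map'_iff, tendsto_map'_iff]
  constructor
  · refine hneg.congr fun n => ?_
    simp only [Function.comp_apply, Equiv.Perm.zpow_neg_natCast_apply, Int.cast_neg,
      Int.cast_natCast, abs_neg, Nat.abs_cast, one_div_mul_eq_div]
  · refine hpos.congr fun n => ?_
    simp only [Function.comp_apply, Equiv.Perm.zpow_natCast_apply, Int.cast_natCast,
      Nat.abs_cast, one_div_mul_eq_div]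

theorem tempered_exp [IsProbabilityMeasure ℙ] (hσ : Measurable σ) (hσinv : Measurable σ.symm)
    (herg : Ergodic σ ℙ) {f : Ω → ℝ} (hf : Measurable f)
    (hd : Integrable (fun x => f (σ.symm x) - f x) ℙ) : Tempered ℙ σ fun x => Real.exp (f x) := by
  have herg' : Ergodic σ.symm ℙ := Ergodic.symm (e := ⟨σ, hσ, hσinv⟩) herg
  have hd' : Integrable (fun x => f (σ x) - f x) ℙ := by
    refine (herg.toMeasurePreserving.integrable_comp_of_integrable hd).neg.congr
      (ae_of_all _ fun x => ?_)
    simp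
  refine tempered_of_ae_tendsto ?_ ?_ <;> simp only [Real.abs_exp, Real.log_exp]
  exacts [herg.ae_tendsto_comp_iterate_div hf hd', herg'.ae_tendsto_comp_iterate_div hf hd]

end Tempered

/-- If `α : Ω → (0,∞)` is measurable with `log α ∈ L¹(ℙ)`,
`κ = ∫ log α dℙ` and `ε > 0`, then there is a measurable, positive, tempered
function `A` such that a.e. `ω` and every `l ≥ 0`,
`∏_{i=1}^{l} α(σ^{-i} ω) ≤ A(ω) e^{(κ+ε) l}`. -/
theorem stmt2 {Ω : Type*} [MeasurableSpace Ω] (ℙ : Measure Ω) [IsProbabilityMeasure ℙ]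
    (σ : Equiv.Perm Ω) (hσ : Measurable (⇑σ)) (hσinv : Measurable (⇑σ.symm))
    (herg : Ergodic (⇑σ) ℙ)
    (α : Ω → ℝ) (hα : Measurable α) (hαpos : ∀ ω, 0 < α ω)
    (hint : Integrable (fun ω => Real.log (α ω)) ℙ)
    (κ : ℝ) (hκ : κ = ∫ ω, Real.log (α ω) ∂ℙ)
    (ε : ℝ) (hε : 0 < ε) :
    ∃ A : Ω → ℝ, Measurable A ∧ (∀ ω, 0 < A ω) ∧ Tempered ℙ σ A ∧
      ∀ᵐ ω ∂ℙ, ∀ l : ℕ,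
        (∏ i ∈ Finset.Icc 1 l, α ((σ ^ (-(i : ℤ))) ω)) ≤ A ω * Real.exp ((κ + ε) * l) := by
  let e : Ω ≃ᵐ Ω := ⟨σ, hσ, hσinv⟩
  have herg' : Ergodic σ.symm ℙ := Ergodic.symm (e := e) herg
  set g : Ω → ℝ := fun ω => Real.log (α (σ.symm ω)) - (κ + ε)
  have hgm : Measurable g := (hα.log.comp hσinv).sub measurable_const
  have hlog : Integrable (fun ω => Real.log (α (σ.symm ω))) ℙ :=
    herg'.toMeasurePreserving.integrable_comp_of_integrable hint
  have hg : Integrable g ℙ := hlog.sub (integrable_const _)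
  have hlog_int : ∫ ω, Real.log (α (σ.symm ω)) ∂ℙ = κ := by
    rw [hκ]
    exact MeasurePreserving.integral_comp' (f := e.symm) herg'.toMeasurePreserving
      fun ω => Real.log (α ω)
  have hneg : ∫ ω, g ω ∂ℙ < 0 := by
    rw [integral_sub hlog (integrable_const _), integral_const, hlog_int]
    simpa using hε
  have hB := measurable_birkhoffSup hσinv hgm
  refine ⟨fun ω => Real.exp (birkhoffSup σ.symm g ω), hB.exp, fun ω => Real.exp_pos _,
    tempered_exp hσ hσinv herg hB (herg'.integrable_birkhoffSup_apply_sub hgm hg hneg), ?_⟩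
  filter_upwards [herg'.ae_bddAbove_birkhoffSum hgm hg hneg] with ω hω l
  rw [prod_Icc_zpow_neg_eq_exp hαpos, Real.exp_add]
  gcongr
  exact birkhoffSum_le_birkhoffSup hω l
end

section
/- Let b = (b_j)_{j∈ℤ} be a sequence of nonnegative reals with var(b) := ∑_{j∈ℤ} |b_j − b_{j−1}| < ∞ and b_j → 0 as j → ±∞. Then for every trigonometric polynomial f = ∑_j a_j φ_j, ‖∑_j b_j a_j φ_j‖_{L^p(𝕋)} ≤ (C_p/2) var(b) ‖f‖_{L^p(𝕋)}. -/
open MeasureTheory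
open scoped ENNReal

instance : Fact ((0 : ℝ) < 1) := ⟨one_pos⟩

/-!
A finitely supported `b ≥ 0` is a positive combination `∑ cₖ 1_{[iₖ, jₖ]}` of interval
indicators with `∑ cₖ = var(b) / 2`: subtracting the minimum `c` of `b` on a maximal run of
positivity `[i, j]` removes one point of the support and lowers the variation by exactly `2c`,
the jumps at `i` and `j + 1` being the only ones that change. Since `b ↦ ‖M_b f‖_p` is sublinear
and bounded by `C_p ‖f‖_p` on interval indicators, this gives the estimate for such `b`.
A general `b` is reduced to this case by clipping, `b ↦ max (b - δ) 0`: clipping has finite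
support, does not increase the variation, and moves each multiplier coefficient by at most `δ`.
-/

open Filter Function Topology

/-- `var(b)`; by the convention for `tsum` it is `0` when the series diverges. -/
noncomputable def variation (b : ℤ → ℝ) : ℝ := ∑' j, |b j - b (j - 1)|

theorem variation_nonneg (b : ℤ → ℝ) : 0 ≤ variation b :=
  tsum_nonneg fun _ => abs_nonneg _

theorem summable_variation_of_support_subset {b : ℤ → ℝ} {t : Finset ℤ}
    (ht : support b ⊆ t) : Summable fun j => |b j - b (j - 1)| := by
  refine summable_of_ne_finset_zero (s := t ∪ t.image (· + 1)) fun j hj => ?_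
  simp only [Finset.mem_union, Finset.mem_image, not_or, not_exists, not_and] at hj
  have h0 : b j = 0 := by_contra fun h => hj.1 (ht h)
  have h1 : b (j - 1) = 0 := by_contra fun h => hj.2 (j - 1) (ht h) (by ring)
  simp [h0, h1]

theorem variation_comp_le {φ : ℝ → ℝ} (hφ : LipschitzWith 1 φ) {b : ℤ → ℝ}
    (hvar : Summable fun j => |b j - b (j - 1)|) : variation (φ ∘ b) ≤ variation b := by
  have hle (j : ℤ) : |φ (b j) - φ (b (j - 1))| ≤ |b j - b (j - 1)| := by
    simpa [Real.dist_eq] using hφ.dist_le_mul (b j) (b (j - 1))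
  exact (hvar.of_nonneg_of_le (fun _ => abs_nonneg _) hle).tsum_le_tsum hle hvar

theorem variation_sub_smul_indicator_Icc {b : ℤ → ℝ} {c : ℝ} {i j : ℤ}
    (hvar : Summable fun k => |b k - b (k - 1)|) (hc : 0 ≤ c) (hij : i ≤ j)
    (hi : c ≤ b i - b (i - 1)) (hj : c ≤ b j - b (j + 1)) :
    variation (b - c • (Set.Icc i j).indicator 1) = variation b - 2 * c := by
  set b' := b - c • (Set.Icc i j).indicator (1 : ℤ → ℝ)
  have hterm (k : ℤ) : |b' k - b' (k - 1)| = |b k - b (k - 1)|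
      - ((Pi.single i c : ℤ → ℝ) k + (Pi.single (j + 1) c : ℤ → ℝ) k) := by
    simp only [b', Pi.sub_apply, Pi.smul_apply, Set.indicator_apply, Set.mem_Icc,
      Pi.one_apply, smul_eq_mul, mul_ite, mul_one, mul_zero]
    rcases eq_or_ne k i with rfl | hki
    · rw [Pi.single_eq_same, Pi.single_eq_of_ne (show k ≠ j + 1 by omega), if_pos ⟨le_rfl, hij⟩,
        if_neg (by omega), abs_of_nonneg (by linarith), abs_of_nonneg (by linarith)]
      ring
    rcases eq_or_ne k (j + 1) with rfl | hkj
    · rw [Pi.single_eq_same, Pi.single_eq_of_ne hki, if_neg (by omega),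
        if_pos ⟨by omega, by omega⟩, add_sub_cancel_right, abs_of_nonpos (by linarith),
        abs_of_nonpos (by linarith)]
      ring
    · rw [Pi.single_eq_of_ne hki, Pi.single_eq_of_ne hkj]
      split_ifs <;> first | omega | ring_nf
  have hsingle (k : ℤ) : Summable (Pi.single k c : ℤ → ℝ) := (hasSum_pi_single k c).summable
  rw [variation, tsum_congr hterm, hvar.tsum_sub ((hsingle i).add (hsingle (j + 1))),
    (hsingle i).tsum_add (hsingle (j + 1)), tsum_pi_single, tsum_pi_single, variation]
  ring

theorem exists_maximal_run {b : ℤ → ℝ} {t : Finset ℤ} (hb : 0 ≤ b) (ht : support b ⊆ t)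
    (hne : b ≠ 0) :
    ∃ i j, i ≤ j ∧ b (i - 1) = 0 ∧ b (j + 1) = 0 ∧ ∀ k ∈ Finset.Icc i j, 0 < b k := by
  obtain ⟨B, hB⟩ := t.bddBelow
  obtain ⟨B', hB'⟩ := t.bddAbove
  obtain ⟨i, hi, hi_least⟩ := Int.exists_least_of_bdd (P := fun k => b k ≠ 0)
    ⟨B, fun k hk => hB (ht hk)⟩ (Function.ne_iff.1 hne)
  obtain ⟨j, ⟨hij, hj⟩, hj_least⟩ := Int.exists_least_of_bdd (P := fun k => i < k ∧ b k = 0)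
    ⟨i, fun k hk => hk.1.le⟩ ⟨max B' i + 1, by omega, by_contra fun h => by
      have := hB' (ht h); omega⟩
  refine ⟨i, j - 1, by omega, by_contra fun h => by have := hi_least _ h; omega,
    by simpa using hj, fun k hk => (hb k).lt_of_ne' fun hk0 => ?_⟩
  rw [Finset.mem_Icc] at hk
  rcases hk.1.eq_or_lt with rfl | hik
  · exact hi hk0
  · have := hj_least k ⟨hik, hk0⟩; omega

theorem finite_support_max_sub {b : ℤ → ℝ} (hlim : Tendsto b cofinite (𝓝 0)) {δ : ℝ}
    (hδ : 0 < δ) : (support fun j => max (b j - δ) 0).Finite :=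
  (eventually_cofinite.1 (hlim.eventually (gt_mem_nhds hδ))).subset fun j hj h =>
    hj (max_eq_right (by linarith))

theorem ENNReal.le_of_forall_pos_le_add_ofReal_mul {x y L : ℝ≥0∞} (hL : L ≠ ⊤)
    (h : ∀ δ : ℝ, 0 < δ → x ≤ y + ENNReal.ofReal δ * L) : x ≤ y := by
  have hlim : Tendsto (fun δ : ℝ => y + ENNReal.ofReal δ * L) (𝓝[>] 0) (𝓝 y) := by
    have h0 : Tendsto ENNReal.ofReal (𝓝[>] 0) (𝓝 0) := by
      simpa using (ENNReal.continuous_ofReal.tendsto 0).mono_left nhdsWithin_le_nhds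
    simpa using tendsto_const_nhds.add (ENNReal.Tendsto.mul_const h0 (Or.inr hL))
  exact ge_of_tendsto hlim (eventually_nhdsWithin_of_forall h)

structure IsSublinear {E : Type*} [AddCommGroup E] [Module ℝ E] (F : E → ℝ≥0∞) : Prop where
  add_le : ∀ b c, F (b + c) ≤ F b + F c
  smul_le : ∀ (c : ℝ) b, 0 ≤ c → F (c • b) ≤ ENNReal.ofReal c * F b

namespace IsSublinear

theorem map_zero {E : Type*} [AddCommGroup E] [Module ℝ E] {F : E → ℝ≥0∞}
    (hF : IsSublinear F) : F 0 = 0 := by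
  simpa using hF.smul_le 0 0 le_rfl

variable {F : (ℤ → ℝ) → ℝ≥0∞} {K : ℝ≥0∞}

theorem le_ofReal_variation_mul_of_support_subset (hF : IsSublinear F)
    (hIcc : ∀ i j, i ≤ j → F ((Set.Icc i j).indicator 1) ≤ K) (t : Finset ℤ) {b : ℤ → ℝ}
    (hb : 0 ≤ b) (ht : support b ⊆ t) : F b ≤ ENNReal.ofReal (variation b / 2) * K := by
  induction t using Finset.strongInduction generalizing b with | H t ih =>
  rcases eq_or_ne b 0 with rfl | hne
  · simp [hF.map_zero]
  obtain ⟨i, j, hij, hi, hj, hpos⟩ := exists_maximal_run hb ht hne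
  obtain ⟨k, hk, hmin⟩ := (Finset.Icc i j).exists_min_image b ⟨i, Finset.mem_Icc.2 ⟨le_rfl, hij⟩⟩
  have hc : 0 < b k := hpos k hk
  set r := (Set.Icc i j).indicator (1 : ℤ → ℝ)
  have hb' : 0 ≤ b - b k • r := fun l => by
    by_cases hl : l ∈ Set.Icc i j
    · simpa [r, hl] using hmin l (by simpa using hl)
    · simpa [r, hl] using hb l
  have ht' : support (b - b k • r) ⊆ t.erase k := fun l hl => by
    have hk' : k ∈ Set.Icc i j := by simpa using hk
    by_cases hl' : l ∈ Set.Icc i j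
    · refine Finset.mem_erase.2 ⟨?_, ht (hpos l (by simpa using hl')).ne'⟩
      rintro rfl
      simp [r, hk'] at hl
    · refine Finset.mem_erase.2 ⟨?_, ht (by simpa [r, hl'] using hl)⟩
      rintro rfl
      exact hl' hk'
  have hvar' : variation (b - b k • r) = variation b - 2 * b k :=
    variation_sub_smul_indicator_Icc (summable_variation_of_support_subset ht) hc.le hij
      (by rw [hi, sub_zero]; exact hmin i (Finset.mem_Icc.2 ⟨le_rfl, hij⟩))
      (by rw [hj, sub_zero]; exact hmin j (Finset.mem_Icc.2 ⟨hij, le_rfl⟩))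
  calc F b = F (b k • r + (b - b k • r)) := by rw [add_sub_cancel]
    _ ≤ ENNReal.ofReal (b k) * K + ENNReal.ofReal (variation (b - b k • r) / 2) * K :=
      (hF.add_le _ _).trans (add_le_add
        ((hF.smul_le _ _ hc.le).trans (mul_le_mul_right (hIcc i j hij) _))
        (ih _ (Finset.erase_ssubset (ht hc.ne')) hb' ht'))
    _ = ENNReal.ofReal (variation b / 2) * K := by
      rw [← add_mul, ← ENNReal.ofReal_add hc.le (by linarith [variation_nonneg (b - b k • r)]),
        hvar']
      ring_nf

theorem le_ofReal_variation_mul (hF : IsSublinear F)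
    (hIcc : ∀ i j, i ≤ j → F ((Set.Icc i j).indicator 1) ≤ K) (hK : K ≠ ⊤) {s : Finset ℤ}
    (hloc : ∀ b c, Set.EqOn b c s → F b = F c) {b : ℤ → ℝ} (hb : 0 ≤ b)
    (hvar : Summable fun j => |b j - b (j - 1)|) (hlim : Tendsto b cofinite (𝓝 0)) :
    F b ≤ ENNReal.ofReal (variation b / 2) * K := by
  refine ENNReal.le_of_forall_pos_le_add_ofReal_mul (L := s.card * K)
    (ENNReal.mul_ne_top (ENNReal.natCast_ne_top _) hK) fun δ hδ => ?_
  set bδ : ℤ → ℝ := fun j => max (b j - δ) 0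
  have hsplit : F b = F (bδ + ∑ j ∈ s, (b j - bδ j) • (Set.Icc j j).indicator 1) := by
    refine hloc _ _ fun k hk => ?_
    simp [Finset.sum_apply, Pi.single_apply, Finset.mem_coe.1 hk]
  have hrem (j : ℤ) : F ((b j - bδ j) • (Set.Icc j j).indicator 1) ≤ ENNReal.ofReal δ * K := by
    have hmax := le_max_left (b j - δ) 0
    have h0 : 0 ≤ b j - bδ j := sub_nonneg.2 (max_le (by linarith) (hb j))
    exact (hF.smul_le _ _ h0).trans
      (mul_le_mul' (ENNReal.ofReal_le_ofReal (by linarith)) (hIcc j j le_rfl))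
  have hclip : LipschitzWith 1 fun x : ℝ => max (x - δ) 0 :=
    LipschitzWith.of_dist_le_mul fun x y => by
      simpa [Real.dist_eq] using abs_max_sub_max_le_abs (x - δ) (y - δ) 0
  have hfin := finite_support_max_sub hlim hδ
  calc F b ≤ F bδ + ∑ j ∈ s, F ((b j - bδ j) • (Set.Icc j j).indicator 1) :=
        hsplit.le.trans ((hF.add_le _ _).trans (add_le_add le_rfl
          (Finset.le_sum_of_subadditive F hF.map_zero.le hF.add_le _ _)))
    _ ≤ ENNReal.ofReal (variation bδ / 2) * K + s.card * (ENNReal.ofReal δ * K) :=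
        add_le_add (hF.le_ofReal_variation_mul_of_support_subset hIcc hfin.toFinset
          (fun j => le_max_right _ _) hfin.coe_toFinset.ge)
          ((Finset.sum_le_card_nsmul _ _ _ fun j _ => hrem j).trans_eq (nsmul_eq_mul _ _))
    _ ≤ ENNReal.ofReal (variation b / 2) * K + ENNReal.ofReal δ * (s.card * K) := by
      rw [mul_left_comm]
      gcongr
      exact variation_comp_le hclip hvar

end IsSublinear

section TrigPoly

variable {T : ℝ}

noncomputable def trigPoly (s : Finset ℤ) (a : ℤ → ℂ) (x : AddCircle T) : ℂ :=
  ∑ j ∈ s, a j * fourier j x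

theorem continuous_trigPoly (s : Finset ℤ) (a : ℤ → ℂ) : Continuous (trigPoly (T := T) s a) :=
  continuous_finsetSum _ fun j _ => continuous_const.mul (fourier j).continuous

theorem trigPoly_congr {s : Finset ℤ} {a a' : ℤ → ℂ} (h : Set.EqOn a a' s) :
    trigPoly (T := T) s a = trigPoly s a' := by
  ext x
  exact Finset.sum_congr rfl fun j hj => by rw [h hj]

theorem trigPoly_indicator_Icc_mul (s : Finset ℤ) (a : ℤ → ℂ) (i j : ℤ) :
    trigPoly (T := T) s (fun l => ((Set.Icc i j).indicator 1 l : ℝ) * a l)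
      = trigPoly (s ∩ Finset.Icc i j) a := by
  ext x
  simp only [trigPoly, ← Finset.filter_mem_eq_inter, Finset.sum_filter, Set.indicator_apply,
    Finset.mem_Icc, Set.mem_Icc]
  refine Finset.sum_congr rfl fun l _ => ?_
  split_ifs <;> simp

theorem isSublinear_eLpNorm_trigPoly {p : ℝ≥0∞} (hp : 1 ≤ p) (μ : Measure (AddCircle T))
    (s : Finset ℤ) (a : ℤ → ℂ) :
    IsSublinear fun b : ℤ → ℝ => eLpNorm (trigPoly s fun j => (b j : ℂ) * a j) p μ where
  add_le b c := by
    have hsum : trigPoly (T := T) s (fun j => ((b + c) j : ℂ) * a j)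
        = trigPoly s (fun j => (b j : ℂ) * a j) + trigPoly s (fun j => (c j : ℂ) * a j) := by
      ext x
      simp [trigPoly, add_mul, Finset.sum_add_distrib]
    rw [hsum]
    exact eLpNorm_add_le (continuous_trigPoly _ _).aestronglyMeasurable
      (continuous_trigPoly _ _).aestronglyMeasurable hp
  smul_le c b hc := by
    have hsmul : trigPoly (T := T) s (fun j => ((c • b) j : ℂ) * a j)
        = (c : ℂ) • trigPoly s (fun j => (b j : ℂ) * a j) := by
      ext x
      simp [trigPoly, Finset.mul_sum, mul_assoc]
    rw [hsmul, eLpNorm_const_smul, ← ofReal_norm, Complex.norm_real, Real.norm_of_nonneg hc]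

end TrigPoly

theorem stmt6_general (p : ℝ≥0∞) (hp : 1 < p)
    (Cp : ℝ)
    (hproj : ∀ i j : ℤ, i ≤ j → ∀ (s : Finset ℤ) (a : ℤ → ℂ),
      eLpNorm (fun x : AddCircle (1 : ℝ) =>
          ∑ l ∈ s ∩ Finset.Icc i j, a l * fourier l x) p volume
        ≤ ENNReal.ofReal Cp *
          eLpNorm (fun x : AddCircle (1 : ℝ) => ∑ l ∈ s, a l * fourier l x) p volume)
    (b : ℤ → ℝ) (hb : ∀ j, 0 ≤ b j)
    (hvar : Summable fun j : ℤ => |b j - b (j - 1)|)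
    (hlim : Filter.Tendsto b Filter.cofinite (nhds 0)) :
    ∀ (s : Finset ℤ) (a : ℤ → ℂ),
      eLpNorm (fun x : AddCircle (1 : ℝ) =>
          ∑ j ∈ s, (b j : ℂ) * a j * fourier j x) p volume
        ≤ ENNReal.ofReal ((Cp / 2) * ∑' j : ℤ, |b j - b (j - 1)|) *
          eLpNorm (fun x : AddCircle (1 : ℝ) => ∑ j ∈ s, a j * fourier j x) p volume := by
  intro s a
  have hN : eLpNorm (trigPoly (T := 1) s a) p volume ≠ ⊤ :=
    ((continuous_trigPoly s a).memLp_of_hasCompactSupport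
      (HasCompactSupport.of_compactSpace _)).eLpNorm_ne_top
  have hIcc (i j : ℤ) (hij : i ≤ j) :
      eLpNorm (trigPoly (T := 1) s fun l => ((Set.Icc i j).indicator 1 l : ℝ) * a l) p volume
        ≤ ENNReal.ofReal Cp * eLpNorm (trigPoly (T := 1) s a) p volume := by
    rw [trigPoly_indicator_Icc_mul]
    exact hproj i j hij s a
  refine ((isSublinear_eLpNorm_trigPoly (T := 1) hp.le volume s a).le_ofReal_variation_mul
    (s := s) hIcc (ENNReal.mul_ne_top ENNReal.ofReal_ne_top hN)
    (fun c d hcd => by rw [trigPoly_congr fun j hj => by rw [hcd hj]]) hb hvar hlim).trans_eq ?_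
  rw [← mul_assoc, ← ENNReal.ofReal_mul (by linarith [variation_nonneg b]), variation]
  congr 2
  ring

/-- If `b = (b_j)` is a nonnegative sequence of summable variation
converging to `0` at `±∞`, then the Fourier multiplier `M_b` satisfies
`‖M_b f‖_p ≤ (C_p/2) var(b) ‖f‖_p` for every trigonometric polynomial `f`, where `C_p`
uniformly bounds the partial-sum projections on `L^p(𝕋)`. -/
theorem stmt6 (p : ℝ≥0∞) (hp : 1 < p) (hp' : p ≠ ⊤)
    (Cp : ℝ) (hCp : 0 < Cp)
    (hproj : ∀ i j : ℤ, i ≤ j → ∀ (s : Finset ℤ) (a : ℤ → ℂ),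
      eLpNorm (fun x : AddCircle (1 : ℝ) =>
          ∑ l ∈ s ∩ Finset.Icc i j, a l * fourier l x) p volume
        ≤ ENNReal.ofReal Cp *
          eLpNorm (fun x : AddCircle (1 : ℝ) => ∑ l ∈ s, a l * fourier l x) p volume)
    (b : ℤ → ℝ) (hb : ∀ j, 0 ≤ b j)
    (hvar : Summable fun j : ℤ => |b j - b (j - 1)|)
    (hlim : Filter.Tendsto b Filter.cofinite (nhds 0)) :
    ∀ (s : Finset ℤ) (a : ℤ → ℂ),
      eLpNorm (fun x : AddCircle (1 : ℝ) =>
          ∑ j ∈ s, (b j : ℂ) * a j * fourier j x) p volume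
        ≤ ENNReal.ofReal ((Cp / 2) * ∑' j : ℤ, |b j - b (j - 1)|) *
          eLpNorm (fun x : AddCircle (1 : ℝ) => ∑ j ∈ s, a j * fourier j x) p volume :=
  stmt6_general p hp Cp hproj b hb hvar hlim
end

section
/- Let 0 < t′ < t < 1. There exists a constant C, depending only on t and t′, such that for every ε > 0 and every trigonometric polynomial f = ∑_j a_j φ_j, ‖∑_j (1+j²)^{(t′−t)/2} (1 − e^{−ε(1+j²)}) a_j φ_j‖_{L^p(𝕋)} ≤ C C_p ε^{(t−t′)/2} ‖f‖_{L^p(𝕋)}. -/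
/-!
With `θ = (t - t') / 2`, the multiplier at frequency `j` is `c |j|`, where
`c k = ε ^ θ * G (ε (1 + k²))` and `G u = u ^ (-θ) * (1 - exp (-u))`. For `0 ≤ θ ≤ 1` we have
`0 ≤ G ≤ 1`, and `G` is unimodal on `(0, ∞)`: `G'(u)` has the sign of `u - θ (exp u - 1)`, a
concave function vanishing at `0`. Hence `c` is a unimodal sequence in `[0, ε ^ θ]`.

Summation by parts writes the multiplier operator as `∑_{r<N} (c r - c (r+1)) S_r + c N S_N`,
where `S_r` is the partial-sum projection onto `[-r, r]`; so its norm is at most `C_p` times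
`∑_{r<N} |c r - c (r+1)| + c N`, which is at most `2 ε ^ θ` for a unimodal sequence with values
in `[0, ε ^ θ]`.
-/

open MeasureTheory
open scoped ENNReal

open Real

noncomputable def besselHeatProfile (θ u : ℝ) : ℝ := u ^ (-θ) * (1 - exp (-u))

section besselHeatProfile

open Set

variable {θ a b c u : ℝ}

lemma besselHeatProfile_nonneg (hu : 0 ≤ u) : 0 ≤ besselHeatProfile θ u :=
  mul_nonneg (rpow_nonneg hu _) (sub_nonneg.2 (exp_le_one_iff.2 (neg_nonpos.2 hu)))

lemma besselHeatProfile_le_one (hθ0 : 0 ≤ θ) (hθ1 : θ ≤ 1) (hu : 0 < u) :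
    besselHeatProfile θ u ≤ 1 := by
  rcases le_total u 1 with hu1 | hu1
  · calc besselHeatProfile θ u ≤ u ^ (-θ) * u :=
          mul_le_mul_of_nonneg_left (by linarith [add_one_le_exp (-u)]) (rpow_nonneg hu.le _)
      _ = u ^ (1 - θ) := by rw [sub_eq_neg_add, rpow_add_one hu.ne']
      _ ≤ 1 := rpow_le_one hu.le hu1 (by linarith)
  · calc besselHeatProfile θ u ≤ 1 * 1 :=
          mul_le_mul (rpow_le_one_of_one_le_of_nonpos hu1 (by linarith))
            (by linarith [exp_pos (-u)]) (sub_nonneg.2 (exp_le_one_iff.2 (by linarith)))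
            zero_le_one
      _ = 1 := one_mul 1

lemma concaveOn_sub_mul_exp_sub_one (hθ : 0 ≤ θ) :
    ConcaveOn ℝ univ (fun u => u - θ * (exp u - 1)) := by
  have := (concaveOn_id convex_univ).sub
    ((convexOn_exp.sub (concaveOn_const 1 convex_univ)).smul hθ)
  simpa [Pi.sub_def] using this

lemma hasDerivAt_besselHeatProfile (θ : ℝ) (hu : 0 < u) :
    HasDerivAt (besselHeatProfile θ)
      (u ^ (-θ - 1) * exp (-u) * (u - θ * (exp u - 1))) u := by
  have hpow : HasDerivAt (fun v : ℝ => v ^ (-θ)) (-θ * u ^ (-θ - 1)) u :=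
    hasDerivAt_rpow_const (Or.inl hu.ne')
  have hexp : HasDerivAt (fun v : ℝ => 1 - exp (-v)) (exp (-u)) u := by
    simpa using ((hasDerivAt_neg u).exp).const_sub 1
  refine (hpow.mul hexp).congr_deriv ?_
  have hsplit : u ^ (-θ) = u ^ (-θ - 1) * u := by rw [rpow_sub_one hu.ne', div_mul_cancel₀ _ hu.ne']
  have hinv : exp (-u) * exp u = 1 := by rw [← exp_add, neg_add_cancel, exp_zero]
  rw [hsplit]
  linear_combination (u ^ (-θ - 1) * θ) * hinv

lemma monotoneOn_besselHeatProfile (hθ : 0 ≤ θ) (ha : 0 < a)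
    (hb : 0 ≤ b - θ * (exp b - 1)) : MonotoneOn (besselHeatProfile θ) (Icc a b) := by
  have hderiv : ∀ u ∈ Icc a b, HasDerivAt (besselHeatProfile θ)
      (u ^ (-θ - 1) * exp (-u) * (u - θ * (exp u - 1))) u :=
    fun u hu => hasDerivAt_besselHeatProfile θ (ha.trans_le hu.1)
  refine monotoneOn_of_hasDerivWithinAt_nonneg (convex_Icc a b)
    (fun u hu => (hderiv u hu).continuousAt.continuousWithinAt)
    (fun u hu => (hderiv u (interior_subset hu)).hasDerivWithinAt) fun u hu => ?_
  rw [interior_Icc] at hu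
  have hu0 : 0 < u := ha.trans hu.1
  have hsign : 0 ≤ u - θ * (exp u - 1) := by
    have := (concaveOn_sub_mul_exp_sub_one hθ).min_le_of_mem_Icc (mem_univ 0) (mem_univ b)
      ⟨hu0.le, hu.2.le⟩
    simp only [exp_zero, sub_self, mul_zero] at this
    exact (le_min le_rfl hb).trans this
  positivity

lemma antitoneOn_besselHeatProfile (hθ : 0 ≤ θ) (ha : 0 < a)
    (ha' : a - θ * (exp a - 1) < 0) : AntitoneOn (besselHeatProfile θ) (Ici a) := by
  have hderiv : ∀ u ∈ Ici a, HasDerivAt (besselHeatProfile θ)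
      (u ^ (-θ - 1) * exp (-u) * (u - θ * (exp u - 1))) u :=
    fun u hu => hasDerivAt_besselHeatProfile θ (ha.trans_le hu)
  refine antitoneOn_of_hasDerivWithinAt_nonpos (convex_Ici a)
    (fun u hu => (hderiv u hu).continuousAt.continuousWithinAt)
    (fun u hu => (hderiv u (interior_subset hu)).hasDerivWithinAt) fun u hu => ?_
  rw [interior_Ici] at hu
  have hu0 : 0 < u := ha.trans hu
  have hsign : u - θ * (exp u - 1) ≤ 0 := by
    by_contra! hpos
    have := (concaveOn_sub_mul_exp_sub_one hθ).min_le_of_mem_Icc (mem_univ 0) (mem_univ u)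
      ⟨ha.le, (show a < u from hu).le⟩
    simp only [exp_zero, sub_self, mul_zero] at this
    exact ha'.not_ge ((le_min le_rfl hpos.le).trans this)
  exact mul_nonpos_of_nonneg_of_nonpos (by positivity) hsign

lemma min_le_besselHeatProfile (hθ : 0 ≤ θ) (ha : 0 < a) (hab : a ≤ b) (hbc : b ≤ c) :
    min (besselHeatProfile θ a) (besselHeatProfile θ c) ≤ besselHeatProfile θ b := by
  rcases le_or_gt 0 (b - θ * (exp b - 1)) with hb | hb
  · exact (min_le_left _ _).trans
      (monotoneOn_besselHeatProfile hθ ha hb ⟨le_rfl, hab⟩ ⟨hab, le_rfl⟩ hab)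
  · exact (min_le_right _ _).trans
      (antitoneOn_besselHeatProfile hθ (ha.trans_le hab) hb self_mem_Ici hbc hbc)

end besselHeatProfile

open Finset

theorem sum_abs_sub_add_le_of_min_le {c : ℕ → ℝ}
    (hc : ∀ i j k, i ≤ j → j ≤ k → min (c i) (c k) ≤ c j) (N : ℕ) {M : ℝ}
    (hM : ∀ k ≤ N, c k ≤ M) :
    ∑ k ∈ range N, |c k - c (k + 1)| + c N ≤ 2 * M - c 0 := by
  induction N generalizing M with
  | zero => simp only [range_zero, sum_empty, zero_add]; linarith [hM 0 le_rfl]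
  | succ N ih =>
    rw [sum_range_succ]
    rcases lt_or_ge (c N) (c (N + 1)) with hup | hdown
    · -- an increase at `N` forces `c ≤ c N` before `N`
      have hmax : ∀ k ≤ N, c k ≤ c N := fun k hk => by
        by_contra! h
        exact (lt_min h hup).not_ge (hc k N (N + 1) hk N.le_succ)
      rw [abs_of_neg (sub_neg.2 hup)]
      linarith [ih hmax, hM (N + 1) le_rfl]
    · rw [abs_of_nonneg (sub_nonneg.2 hdown)]
      linarith [ih fun k hk => hM k (hk.trans N.le_succ)]

theorem sum_natAbs_smul_eq_sum_range {R E : Type*} [Ring R] [AddCommGroup E] [Module R E]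
    (c : ℕ → R) (v : ℤ → E) {s : Finset ℤ} {N : ℕ} (hN : ∀ j ∈ s, j.natAbs ≤ N) :
    ∑ j ∈ s, c j.natAbs • v j =
      ∑ r ∈ range N, (c r - c (r + 1)) • ∑ j ∈ s ∩ Icc (-(r : ℤ)) r, v j
        + c N • ∑ j ∈ s, v j := by
  have htel : ∀ m ≤ N, ∑ r ∈ range N, (if m ≤ r then c r - c (r + 1) else 0) = c m - c N := by
    intro m hm
    rw [← sum_filter, show (range N).filter (m ≤ ·) = Ico m N by ext; simp; omega,
      ← neg_sub (c N), ← sum_Ico_sub c hm, ← sum_neg_distrib]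
    simp
  have hmem : ∀ (j : ℤ) (r : ℕ), j ∈ Icc (-(r : ℤ)) r ↔ j.natAbs ≤ r := by
    intro j r; simp only [mem_Icc]; omega
  simp_rw [← sum_ite_mem s, hmem, smul_sum, smul_ite, smul_zero, ← ite_zero_smul]
  rw [sum_comm, ← sum_add_distrib]
  refine sum_congr rfl fun j hj => ?_
  rw [← sum_smul, htel _ (hN j hj), ← add_smul, sub_add_cancel]

section

variable {α : Type*} [MeasurableSpace α] {μ : Measure α} {p : ℝ≥0∞}

theorem eLpNorm_sum_natAbs_mul_le (hp : 1 ≤ p) (c : ℕ → ℝ) {F : ℤ → α → ℂ}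
    (hF : ∀ j, AEStronglyMeasurable (F j) μ) {s : Finset ℤ} {N : ℕ}
    (hN : ∀ j ∈ s, j.natAbs ≤ N) {B : ℝ≥0∞}
    (hB : ∀ r : ℕ, eLpNorm (fun x => ∑ j ∈ s ∩ Icc (-(r : ℤ)) r, F j x) p μ ≤ B) :
    eLpNorm (fun x => ∑ j ∈ s, (c j.natAbs : ℂ) * F j x) p μ
      ≤ ENNReal.ofReal (∑ r ∈ range N, |c r - c (r + 1)| + |c N|) * B := by
  simp_rw [← smul_eq_mul, ← Finset.sum_fn, ← Pi.smul_def] at hB ⊢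
  have hS : ∀ r : ℕ, AEStronglyMeasurable (∑ j ∈ s ∩ Icc (-(r : ℤ)) r, F j) μ :=
    fun r => Finset.aestronglyMeasurable_sum _ fun j _ => hF j
  have hfull : s ∩ Icc (-(N : ℤ)) N = s :=
    inter_eq_left.2 fun j hj => by have := hN j hj; simp only [mem_Icc]; omega
  have henorm : ∀ x : ℝ, ‖(x : ℂ)‖ₑ = ENNReal.ofReal |x| := fun x => by
    rw [← ofReal_norm, Complex.norm_real, Real.norm_eq_abs]
  rw [sum_natAbs_smul_eq_sum_range (fun k => (c k : ℂ)) F hN]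
  have hSN := hS N
  have hBN := hB N
  rw [hfull] at hSN hBN
  calc _ ≤ ∑ r ∈ range N, eLpNorm ((c r - c (r + 1) : ℂ) • ∑ j ∈ s ∩ Icc (-(r : ℤ)) r, F j) p μ
          + eLpNorm ((c N : ℂ) • ∑ j ∈ s, F j) p μ := by
        refine (eLpNorm_add_le (Finset.aestronglyMeasurable_sum _ fun r _ => (hS r).const_smul _)
          (hSN.const_smul _) hp).trans ?_
        gcongr
        exact eLpNorm_sum_le (fun r _ => (hS r).const_smul _) hp
    _ ≤ ∑ r ∈ range N, ENNReal.ofReal |c r - c (r + 1)| * B + ENNReal.ofReal |c N| * B := by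
        simp_rw [eLpNorm_const_smul, ← Complex.ofReal_sub, henorm]
        gcongr with r
        exact hB r
    _ = ENNReal.ofReal (∑ r ∈ range N, |c r - c (r + 1)| + |c N|) * B := by
        rw [← sum_mul, ← add_mul, ENNReal.ofReal_add (sum_nonneg fun r _ => abs_nonneg _)
          (abs_nonneg _), ENNReal.ofReal_sum_of_nonneg fun r _ => abs_nonneg _]

theorem eLpNorm_sum_natAbs_mul_le_of_min_le (hp : 1 ≤ p) {c : ℕ → ℝ} {M : ℝ}
    (hc0 : ∀ k, 0 ≤ c k) (hcM : ∀ k, c k ≤ M)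
    (hc : ∀ i j k, i ≤ j → j ≤ k → min (c i) (c k) ≤ c j)
    {F : ℤ → α → ℂ} (hF : ∀ j, AEStronglyMeasurable (F j) μ) (s : Finset ℤ) {B : ℝ≥0∞}
    (hB : ∀ r : ℕ, eLpNorm (fun x => ∑ j ∈ s ∩ Icc (-(r : ℤ)) r, F j x) p μ ≤ B) :
    eLpNorm (fun x => ∑ j ∈ s, (c j.natAbs : ℂ) * F j x) p μ ≤ ENNReal.ofReal (2 * M) * B := by
  set N := s.sup Int.natAbs
  refine (eLpNorm_sum_natAbs_mul_le hp c hF (fun j hj => le_sup (f := Int.natAbs) hj) hB).trans ?_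
  gcongr
  rw [abs_of_nonneg (hc0 N)]
  linarith [sum_abs_sub_add_le_of_min_le hc N fun k _ => hcM k, hc0 0]

end

theorem stmt9_general (p : ℝ≥0∞) (hp : 1 < p)
    (Cp : ℝ)
    (hproj : ∀ i j : ℤ, i ≤ j → ∀ (s : Finset ℤ) (a : ℤ → ℂ),
      eLpNorm (fun x : AddCircle (1 : ℝ) =>
          ∑ l ∈ s ∩ Finset.Icc i j, a l * fourier l x) p volume
        ≤ ENNReal.ofReal Cp *
          eLpNorm (fun x : AddCircle (1 : ℝ) => ∑ l ∈ s, a l * fourier l x) p volume)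
    (t t' : ℝ) (ht'0 : 0 < t') (ht't : t' < t) (ht1 : t < 1) :
    ∃ C : ℝ, 0 < C ∧ ∀ ε : ℝ, 0 < ε → ∀ (s : Finset ℤ) (a : ℤ → ℂ),
      eLpNorm (fun x : AddCircle (1 : ℝ) =>
          ∑ j ∈ s, (((1 + (j : ℝ) ^ 2) ^ ((t' - t) / 2) *
              (1 - Real.exp (-(ε * (1 + (j : ℝ) ^ 2)))) : ℝ) : ℂ) * a j * fourier j x)
          p volume
        ≤ ENNReal.ofReal (C * Cp * ε ^ ((t - t') / 2)) *
          eLpNorm (fun x : AddCircle (1 : ℝ) => ∑ j ∈ s, a j * fourier j x) p volume := by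
  set θ := (t - t') / 2 with hθ
  have hθ0 : 0 ≤ θ := by linarith
  have hθ1 : θ ≤ 1 := by linarith
  refine ⟨2, two_pos, fun ε hε s a => ?_⟩
  have hεθ : 0 ≤ ε ^ θ := rpow_nonneg hε.le θ
  set u : ℕ → ℝ := fun k => ε * (1 + (k : ℝ) ^ 2)
  have hu : ∀ k, 0 < u k := fun k => by positivity
  have hmono : Monotone u := fun i j hij => by simp only [u]; gcongr
  have hmult : ∀ j : ℤ,
      (1 + (j : ℝ) ^ 2) ^ ((t' - t) / 2) * (1 - exp (-(ε * (1 + (j : ℝ) ^ 2))))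
        = ε ^ θ * besselHeatProfile θ (u j.natAbs) := by
    intro j
    have hsq : ((j.natAbs : ℕ) : ℝ) ^ 2 = (j : ℝ) ^ 2 := by
      rw [Nat.cast_natAbs, Int.cast_abs, sq_abs]
    simp only [u, besselHeatProfile, hsq]
    rw [mul_rpow hε.le (by positivity), ← mul_assoc, ← mul_assoc, ← rpow_add hε, add_neg_cancel,
      rpow_zero, one_mul, show (t' - t) / 2 = -θ by rw [hθ]; ring]
  have key := eLpNorm_sum_natAbs_mul_le_of_min_le (μ := volume) hp.le (M := ε ^ θ)
    (c := fun k => ε ^ θ * besselHeatProfile θ (u k))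
    (fun k => mul_nonneg hεθ (besselHeatProfile_nonneg (hu k).le))
    (fun k => mul_le_of_le_one_right hεθ (besselHeatProfile_le_one hθ0 hθ1 (hu k)))
    (fun i j k hij hjk => by
      rw [← mul_min_of_nonneg _ _ hεθ]
      exact mul_le_mul_of_nonneg_left
        (min_le_besselHeatProfile hθ0 (hu i) (hmono hij) (hmono hjk)) hεθ)
    (fun j => (continuous_const.mul (fourier j).continuous).aestronglyMeasurable) s
    (fun r => hproj (-r) r (by omega) s a)
  simp only [hmult, mul_assoc _ (a _)]
  refine key.trans_eq ?_
  rw [← mul_assoc, ← ENNReal.ofReal_mul (by positivity), mul_right_comm]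

/-- Let `0 < t' < t < 1`. There is a constant `C = C(t,t')` such that
for every `ε > 0` and every trigonometric polynomial `f = ∑ a_j φ_j`,
`‖∑_j (1+j²)^{(t'−t)/2} (1 − e^{−ε(1+j²)}) a_j φ_j‖_p ≤ C C_p ε^{(t−t')/2} ‖f‖_p`. -/
theorem stmt9 (p : ℝ≥0∞) (hp : 1 < p) (hp' : p ≠ ⊤)
    (Cp : ℝ) (hCp : 0 < Cp)
    (hproj : ∀ i j : ℤ, i ≤ j → ∀ (s : Finset ℤ) (a : ℤ → ℂ),
      eLpNorm (fun x : AddCircle (1 : ℝ) =>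
          ∑ l ∈ s ∩ Finset.Icc i j, a l * fourier l x) p volume
        ≤ ENNReal.ofReal Cp *
          eLpNorm (fun x : AddCircle (1 : ℝ) => ∑ l ∈ s, a l * fourier l x) p volume)
    (t t' : ℝ) (ht'0 : 0 < t') (ht't : t' < t) (ht1 : t < 1) :
    ∃ C : ℝ, 0 < C ∧ ∀ ε : ℝ, 0 < ε → ∀ (s : Finset ℤ) (a : ℤ → ℂ),
      eLpNorm (fun x : AddCircle (1 : ℝ) =>
          ∑ j ∈ s, (((1 + (j : ℝ) ^ 2) ^ ((t' - t) / 2) *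
              (1 - Real.exp (-(ε * (1 + (j : ℝ) ^ 2)))) : ℝ) : ℂ) * a j * fourier j x)
          p volume
        ≤ ENNReal.ofReal (C * Cp * ε ^ ((t - t') / 2)) *
          eLpNorm (fun x : AddCircle (1 : ℝ) => ∑ j ∈ s, a j * fourier j x) p volume :=
  stmt9_general p hp Cp hproj t t' ht'0 ht't ht1
end

section
/- Let p > 1 and 0 < t < 1. There exists a constant C, depending only on p and t, such that for every k ≥ 1 and every f ∈ L^p(ℝ), ∫_0^1 |E_k f(x) − f(x)|^p dx ≤ C k^{−pt} ∫_0^1 (∫_{2/k}^{3/k} H_r f(x) dr)^{p/2} dx. -/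
/-! The bound holds pointwise in `x`. With `I` the cell of the partition containing `x`,
`|E_k f(x) - f(x)| ≤ k ∫_I |f(s) - f(x)| ds`. For `r ∈ [2/k, 3/k]` the cell lies in
`[x - r, x + r]`, and the substitution `s = x + r y` gives
`H_r f(x) = r^{-3-2t} (∫_{x-r}^{x+r} |f(s) - f(x)| ds)² ≥ (3/k)^{-3-2t} (∫_I |f(s) - f(x)| ds)²`.
Averaging over `r` and raising to the power `p/2` yields
`|E_k f(x) - f(x)|^p ≤ 3^{(3+2t)p/2} k^{-pt} (∫_{2/k}^{3/k} H_r f(x) dr)^{p/2}`. -/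

open MeasureTheory
open scoped ENNReal

/-- The conditional expectation `E_k` with respect to the partition of `ℝ` into the
intervals `[j/k, (j+1)/k)`, `j ∈ ℤ`. -/
noncomputable def Ek (k : ℕ) (f : ℝ → ℝ) (x : ℝ) : ℝ :=
  (k : ℝ) * ∫ s in Set.Ico ((⌊x * k⌋ : ℝ) / k) (((⌊x * k⌋ : ℝ) + 1) / k), f s

/-- `H_r f(x) = r^{−1−2t} (∫_{−1}^{1} |f(x+ry) − f(x)| dy)²` (as an `ℝ≥0∞`-valued
quantity, so that no integrability assumptions are needed). -/
noncomputable def HrL (t : ℝ) (f : ℝ → ℝ) (x r : ℝ) : ℝ≥0∞ :=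
  ENNReal.ofReal (r ^ (-(1 + 2 * t))) *
    (∫⁻ y in Set.Icc (-1 : ℝ) 1, ENNReal.ofReal |f (x + r * y) - f x|) ^ 2

open Set

lemma lintegral_Icc_neg_one_one_comp_affine {g : ℝ → ℝ≥0∞} (hg : Measurable g) (c : ℝ) {r : ℝ}
    (hr : 0 < r) :
    ∫⁻ y in Icc (-1 : ℝ) 1, g (c + r * y) =
      ENNReal.ofReal r⁻¹ * ∫⁻ s in Icc (c - r) (c + r), g s := by
  set φ : ℝ → ℝ := fun y ↦ c + r * y
  have hφ : Measurable φ := (measurable_const_mul r).const_add c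
  have hpre : φ ⁻¹' Icc (c - r) (c + r) = Icc (-1 : ℝ) 1 := by
    ext y
    simp only [φ, mem_preimage, mem_Icc]
    constructor <;> rintro ⟨h1, h2⟩ <;> constructor <;> nlinarith
  have hmap : Measure.map φ volume = ENNReal.ofReal r⁻¹ • (volume : Measure ℝ) := by
    change Measure.map ((c + ·) ∘ (r * ·)) volume = _
    rw [← Measure.map_map (measurable_const_add c) (measurable_const_mul r),
      Real.map_volume_mul_left hr.ne', Measure.map_smul,
      (measurePreserving_add_left volume c).map_eq, abs_of_pos (inv_pos.mpr hr)]
  rw [← hpre, ← lintegral_map hg hφ, ← Measure.restrict_map hφ measurableSet_Icc, hmap,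
    Measure.restrict_smul, lintegral_smul_measure, smul_eq_mul]

lemma sq_lintegral_Icc_eq_rpow_mul_HrL {f : ℝ → ℝ} (hf : Measurable f) (t x : ℝ) {r : ℝ}
    (hr : 0 < r) :
    (∫⁻ s in Icc (x - r) (x + r), ENNReal.ofReal |f s - f x|) ^ 2 =
      ENNReal.ofReal (r ^ (3 + 2 * t)) * HrL t f x r := by
  have hscale : r ^ (3 + 2 * t) * r ^ (-(1 + 2 * t)) * r⁻¹ ^ 2 = 1 := by
    rw [← Real.rpow_add hr, inv_pow, show 3 + 2 * t + -(1 + 2 * t) = (2 : ℕ) by ring,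
      Real.rpow_natCast, mul_inv_cancel₀ (by positivity)]
  rw [HrL, lintegral_Icc_neg_one_one_comp_affine (g := fun s ↦ ENNReal.ofReal |f s - f x|)
    (by fun_prop) x hr,
    mul_pow, ← mul_assoc, ← mul_assoc, ← ENNReal.ofReal_mul (by positivity),
    ← ENNReal.ofReal_pow (by positivity), ← ENNReal.ofReal_mul (by positivity), hscale,
    ENNReal.ofReal_one, one_mul]

lemma mem_Ico_floor_mul_div (x : ℝ) {k : ℝ} (hk : 0 < k) :
    x ∈ Ico ((⌊x * k⌋ : ℝ) / k) (((⌊x * k⌋ : ℝ) + 1) / k) :=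
  ⟨(div_le_iff₀ hk).2 (Int.floor_le _), (lt_div_iff₀ hk).2 (Int.lt_floor_add_one _)⟩

lemma ofReal_abs_Ek_sub_le {k : ℕ} (hk : 1 ≤ k) {f : ℝ → ℝ} (hf : LocallyIntegrable f) (x : ℝ) :
    ENNReal.ofReal |Ek k f x - f x| ≤ k *
      ∫⁻ s in Ico ((⌊x * k⌋ : ℝ) / k) (((⌊x * k⌋ : ℝ) + 1) / k), ENNReal.ofReal |f s - f x| := by
  set a : ℝ := (⌊x * k⌋ : ℝ) / k
  set b : ℝ := ((⌊x * k⌋ : ℝ) + 1) / k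
  have hk0 : (0 : ℝ) < k := by exact_mod_cast hk
  have hlen : b - a = (k : ℝ)⁻¹ := by simp only [a, b]; field_simp; ring
  have hint : IntegrableOn f (Ico a b) :=
    (hf.integrableOn_isCompact isCompact_Icc).mono_set Ico_subset_Icc_self
  have hEk : Ek k f x - f x = k * ∫ s in Ico a b, (f s - f x) := by
    change (k * ∫ s in Ico a b, f s) - f x = _
    rw [integral_sub hint (integrableOn_const (by simp)), setIntegral_const, measureReal_def,
      Real.volume_Ico, hlen, ENNReal.toReal_ofReal (by positivity), smul_eq_mul]
    field_simp
  simp_rw [← Real.enorm_eq_ofReal_abs]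
  rw [hEk, enorm_mul, Real.enorm_natCast]
  gcongr
  exact enorm_integral_le_lintegral_enorm _

lemma sq_lintegral_Ico_le_mul_lintegral_HrL {f : ℝ → ℝ} (hf : Measurable f) {t : ℝ}
    (ht : 0 ≤ 3 + 2 * t) {a b x ρ R : ℝ} (hx : x ∈ Ico a b) (hρ : b - a ≤ ρ) (hρR : ρ < R) :
    (∫⁻ s in Ico a b, ENNReal.ofReal |f s - f x|) ^ 2 ≤
      ENNReal.ofReal (R ^ (3 + 2 * t) / (R - ρ)) * ∫⁻ r in Icc ρ R, HrL t f x r := by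
  set J := ∫⁻ s in Ico a b, ENNReal.ofReal |f s - f x|
  have hpointwise : ∀ r ∈ Icc ρ R, J ^ 2 ≤ ENNReal.ofReal (R ^ (3 + 2 * t)) * HrL t f x r := by
    rintro r ⟨hρr, hrR⟩
    have hr : 0 < r := by linarith [hx.1, hx.2]
    have hsub : Ico a b ⊆ Icc (x - r) (x + r) := fun s hs ↦
      ⟨by linarith [hx.2, hs.1], by linarith [hx.1, hs.2]⟩
    calc J ^ 2 ≤ (∫⁻ s in Icc (x - r) (x + r), ENNReal.ofReal |f s - f x|) ^ 2 := by
          gcongr; exact lintegral_mono_set hsub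
      _ = ENNReal.ofReal (r ^ (3 + 2 * t)) * HrL t f x r :=
          sq_lintegral_Icc_eq_rpow_mul_HrL hf t x hr
      _ ≤ ENNReal.ofReal (R ^ (3 + 2 * t)) * HrL t f x r := by gcongr
  have hlen : 0 < R - ρ := by linarith
  have hintegrated : ENNReal.ofReal (R - ρ) * J ^ 2 ≤
      ENNReal.ofReal (R ^ (3 + 2 * t)) * ∫⁻ r in Icc ρ R, HrL t f x r := by
    calc ENNReal.ofReal (R - ρ) * J ^ 2 = ∫⁻ _ in Icc ρ R, J ^ 2 := by
          rw [setLIntegral_const, Real.volume_Icc, mul_comm]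
      _ ≤ ∫⁻ r in Icc ρ R, ENNReal.ofReal (R ^ (3 + 2 * t)) * HrL t f x r :=
          setLIntegral_mono' measurableSet_Icc hpointwise
      _ = _ := lintegral_const_mul' _ _ ENNReal.ofReal_ne_top
  calc J ^ 2 = ENNReal.ofReal (R - ρ)⁻¹ * (ENNReal.ofReal (R - ρ) * J ^ 2) := by
        rw [← mul_assoc, ← ENNReal.ofReal_mul (by positivity), inv_mul_cancel₀ hlen.ne',
          ENNReal.ofReal_one, one_mul]
    _ ≤ _ := by
        rw [div_eq_inv_mul, ENNReal.ofReal_mul (by positivity), mul_assoc]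
        gcongr

lemma rpow_mul_rpow_div_sub_rpow_eq {k : ℝ} (hk : 0 < k) (p t : ℝ) :
    k ^ p * ((3 / k) ^ (3 + 2 * t) / (3 / k - 2 / k)) ^ (p / 2) =
      3 ^ ((3 + 2 * t) * (p / 2)) * k ^ (-(p * t)) := by
  have hbase :
      (3 / k) ^ (3 + 2 * t) / (3 / k - 2 / k) = 3 ^ (3 + 2 * t) * k ^ (-(2 + 2 * t)) := by
    rw [Real.div_rpow (by norm_num) hk.le, show -(2 + 2 * t) = 1 - (3 + 2 * t) by ring,
      Real.rpow_sub hk, Real.rpow_one]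
    field_simp
    ring
  rw [hbase, Real.mul_rpow (by positivity) (by positivity), ← Real.rpow_mul (by norm_num),
    ← Real.rpow_mul hk.le, mul_left_comm, ← Real.rpow_add hk]
  ring_nf

lemma ofReal_abs_Ek_sub_rpow_le {p t : ℝ} (hp : 0 ≤ p) (ht : 0 ≤ 3 + 2 * t) {k : ℕ} (hk : 1 ≤ k)
    {f : ℝ → ℝ} (hf : Measurable f) (hfi : LocallyIntegrable f) (x : ℝ) :
    ENNReal.ofReal |Ek k f x - f x| ^ p ≤
      ENNReal.ofReal (3 ^ ((3 + 2 * t) * (p / 2)) * (k : ℝ) ^ (-(p * t))) *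
        (∫⁻ r in Icc (2 / (k : ℝ)) (3 / (k : ℝ)), HrL t f x r) ^ (p / 2) := by
  have hk0 : (0 : ℝ) < k := by exact_mod_cast hk
  set J := ∫⁻ s in Ico ((⌊x * k⌋ : ℝ) / k) (((⌊x * k⌋ : ℝ) + 1) / k), ENNReal.ofReal |f s - f x|
  set G := ∫⁻ r in Icc (2 / (k : ℝ)) (3 / (k : ℝ)), HrL t f x r
  have hgap : 2 / (k : ℝ) < 3 / k := by gcongr; norm_num
  have hJ : J ^ 2 ≤ ENNReal.ofReal ((3 / k) ^ (3 + 2 * t) / (3 / k - 2 / k)) * G :=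
    sq_lintegral_Ico_le_mul_lintegral_HrL hf ht (mem_Ico_floor_mul_div x hk0)
      (by field_simp; norm_num) hgap
  calc ENNReal.ofReal |Ek k f x - f x| ^ p ≤ (k * J) ^ p :=
        ENNReal.rpow_le_rpow (ofReal_abs_Ek_sub_le hk hfi x) hp
    _ = ENNReal.ofReal (k ^ p) * (J ^ 2) ^ (p / 2) := by
        rw [ENNReal.mul_rpow_of_nonneg _ _ hp, ← ENNReal.ofReal_natCast,
          ENNReal.ofReal_rpow_of_nonneg hk0.le hp, ← ENNReal.rpow_two, ← ENNReal.rpow_mul]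
        ring_nf
    _ ≤ ENNReal.ofReal (k ^ p) *
          (ENNReal.ofReal ((3 / k) ^ (3 + 2 * t) / (3 / k - 2 / k)) * G) ^ (p / 2) := by
        gcongr
    _ = _ := by
        rw [ENNReal.mul_rpow_of_nonneg _ _ (by positivity), ← mul_assoc,
          ENNReal.ofReal_rpow_of_nonneg (div_nonneg (by positivity) (sub_nonneg.2 hgap.le))
            (by positivity),
          ← ENNReal.ofReal_mul (by positivity), rpow_mul_rpow_div_sub_rpow_eq hk0]

theorem stmt11_general (p t : ℝ) (hp : 1 < p) (ht0 : 0 < t) :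
    ∃ C : ℝ, 0 < C ∧ ∀ k : ℕ, 1 ≤ k → ∀ f : ℝ → ℝ, Measurable f →
      MemLp f (ENNReal.ofReal p) volume →
      (∫⁻ x in Set.Ioc (0 : ℝ) 1, ENNReal.ofReal |Ek k f x - f x| ^ p)
        ≤ ENNReal.ofReal (C * (k : ℝ) ^ (-(p * t))) *
          ∫⁻ x in Set.Ioc (0 : ℝ) 1,
            (∫⁻ r in Set.Icc (2 / (k : ℝ)) (3 / (k : ℝ)), HrL t f x r) ^ (p / 2) := by
  refine ⟨3 ^ ((3 + 2 * t) * (p / 2)), by positivity, fun k hk f hf hfp ↦ ?_⟩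
  have hfi : LocallyIntegrable f := hfp.locallyIntegrable (ENNReal.one_le_ofReal.2 hp.le)
  calc _ ≤ ∫⁻ x in Ioc 0 1,
          ENNReal.ofReal (3 ^ ((3 + 2 * t) * (p / 2)) * (k : ℝ) ^ (-(p * t))) *
            (∫⁻ r in Icc (2 / (k : ℝ)) (3 / (k : ℝ)), HrL t f x r) ^ (p / 2) :=
        lintegral_mono fun x ↦ ofReal_abs_Ek_sub_rpow_le (by linarith) (by linarith) hk hf hfi x
    _ = _ := lintegral_const_mul' _ _ ENNReal.ofReal_ne_top

/-- For `p > 1`, `0 < t < 1`, there is `C = C(p,t)` such that for all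
`k ≥ 1` and `f ∈ L^p(ℝ)`,
`∫_0^1 |E_k f − f|^p ≤ C k^{−pt} ∫_0^1 (∫_{2/k}^{3/k} H_r f(x) dr)^{p/2} dx`. -/
theorem stmt11 (p t : ℝ) (hp : 1 < p) (ht0 : 0 < t) (ht1 : t < 1) :
    ∃ C : ℝ, 0 < C ∧ ∀ k : ℕ, 1 ≤ k → ∀ f : ℝ → ℝ, Measurable f →
      MemLp f (ENNReal.ofReal p) volume →
      (∫⁻ x in Set.Ioc (0 : ℝ) 1, ENNReal.ofReal |Ek k f x - f x| ^ p)
        ≤ ENNReal.ofReal (C * (k : ℝ) ^ (-(p * t))) *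
          ∫⁻ x in Set.Ioc (0 : ℝ) 1,
            (∫⁻ r in Set.Icc (2 / (k : ℝ)) (3 / (k : ℝ)), HrL t f x r) ^ (p / 2) :=
  stmt11_general p t hp ht0
end

section
/- Let p > 1 and t > 0, and let f ∈ L^p(ℝ) vanish a.e. outside an interval [a,b]. Let a′ < a ≤ b < b′ and c := min(a − a′, b′ − b) > 0. Then ∫_{ℝ∖[a′,b′]} (∫_{|h| ≥ c} |f(x+h)| |h|^{−1−t} dh)^p dx ≤ (2/(p + pt − 1)) (b−a)^{p−1} c^{1−p−pt} ‖f‖_{L^p(ℝ)}^p. -/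
open MeasureTheory
open scoped ENNReal

/-!
For each `x`, the function `h ↦ f (x + h)` vanishes outside an interval of length `b - a`, so
Hölder's inequality on that interval bounds the `p`-th power of the inner integral by
`(b - a) ^ (p - 1) * ∫_{|h| ≥ c} |f (x + h)| ^ p * |h| ^ (-p (1 + t)) dh`. After enlarging the
outer domain to all of `ℝ`, Tonelli and translation invariance factor the double integral as
`‖f‖_p ^ p * ∫_{|h| ≥ c} |h| ^ (-p (1 + t)) dh`, and the last integral is
`2 c ^ (1 - p - p t) / (p + p t - 1)`.
-/

open Set Measure

section Holder

variable {α : Type*} [MeasurableSpace α] {μ : Measure α} {u : α → ℝ≥0∞} {p : ℝ}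

theorem rpow_lintegral_le_measure_univ_mul (hu : AEMeasurable u μ) (hp : 1 < p) :
    (∫⁻ x, u x ∂μ) ^ p ≤ μ univ ^ (p - 1) * ∫⁻ x, u x ^ p ∂μ := by
  have hpq := Real.HolderConjugate.conjExponent hp
  have hp0 : 0 < p := by linarith
  have holder := ENNReal.lintegral_mul_le_Lp_mul_Lq μ hpq hu aemeasurable_const (g := 1)
  simp only [Pi.mul_apply, Pi.one_apply, mul_one, ENNReal.one_rpow, lintegral_const,
    one_mul] at holder
  calc (∫⁻ x, u x ∂μ) ^ p
      ≤ ((∫⁻ x, u x ^ p ∂μ) ^ (1 / p) * μ univ ^ (1 / p.conjExponent)) ^ p := by gcongr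
    _ = μ univ ^ (p - 1) * ∫⁻ x, u x ^ p ∂μ := by
      rw [ENNReal.mul_rpow_of_nonneg _ _ hp0.le, ← ENNReal.rpow_mul, ← ENNReal.rpow_mul,
        one_div_mul_cancel hp0.ne', ENNReal.rpow_one, div_mul_eq_mul_div, one_mul,
        hpq.div_conj_eq_sub_one, mul_comm]

theorem rpow_lintegral_le_measure_mul_of_ae_eq_zero {T : Set α} (hT : MeasurableSet T)
    (hu : AEMeasurable u μ) (hu0 : ∀ᵐ x ∂μ, x ∉ T → u x = 0) (hp : 1 < p) :
    (∫⁻ x, u x ∂μ) ^ p ≤ μ T ^ (p - 1) * ∫⁻ x, u x ^ p ∂μ := by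
  have hrestrict : ∫⁻ x, u x ∂μ = ∫⁻ x in T, u x ∂μ := by
    rw [← lintegral_indicator hT]
    refine lintegral_congr_ae (hu0.mono fun x hx => ?_)
    by_cases hxT : x ∈ T <;> simp [hxT, hx]
  calc (∫⁻ x, u x ∂μ) ^ p
      ≤ μ.restrict T univ ^ (p - 1) * ∫⁻ x in T, u x ^ p ∂μ :=
        hrestrict ▸ rpow_lintegral_le_measure_univ_mul hu.restrict hp
    _ ≤ μ T ^ (p - 1) * ∫⁻ x, u x ^ p ∂μ := by
      rw [restrict_apply_univ]
      gcongr
      exact restrict_le_self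

end Holder

theorem lintegral_lintegral_comp_add_mul {G : Type*} [MeasurableSpace G] [AddGroup G]
    [MeasurableAdd₂ G] {μ ν : Measure G} [SFinite μ] [SFinite ν] [μ.IsAddRightInvariant]
    {F K : G → ℝ≥0∞} (hF : AEMeasurable F μ) (hK : AEMeasurable K ν) :
    ∫⁻ x, ∫⁻ h, F (x + h) * K h ∂ν ∂μ = (∫⁻ h, K h ∂ν) * ∫⁻ x, F x ∂μ := by
  have hadd : QuasiMeasurePreserving (fun z : G × G => z.1 + z.2) (μ.prod ν) μ :=
    quasiMeasurePreserving_fst.comp (measurePreserving_add_prod μ ν).quasiMeasurePreserving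
  have htranslate (h : G) : ∫⁻ x, F (x + h) * K h ∂μ = (∫⁻ x, F x ∂μ) * K h := by
    rw [lintegral_mul_const'' (f := fun x => F (x + h)) _
      (hF.comp_quasiMeasurePreserving (measurePreserving_add_right μ h).quasiMeasurePreserving),
      lintegral_add_right_eq_self F h]
  rw [lintegral_lintegral_swap ((hF.comp_quasiMeasurePreserving hadd).mul
      (hK.comp_quasiMeasurePreserving quasiMeasurePreserving_snd)),
    lintegral_congr htranslate, lintegral_const_mul'' _ hK, mul_comm]

theorem lintegral_Ioi_rpow_of_lt {a c : ℝ} (ha : a < -1) (hc : 0 < c) :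
    ∫⁻ x in Ioi c, ENNReal.ofReal (x ^ a) = ENNReal.ofReal (-c ^ (a + 1) / (a + 1)) := by
  rw [← ofReal_integral_eq_lintegral_ofReal (integrableOn_Ioi_rpow_of_lt ha hc),
    integral_Ioi_rpow_of_lt ha hc]
  exact (ae_restrict_iff' measurableSet_Ioi).2
    (ae_of_all _ fun x hx => Real.rpow_nonneg (hc.trans hx).le a)

theorem setLIntegral_abs_rpow_tail {a c : ℝ} (ha : a < -1) (hc : 0 < c) :
    ∫⁻ h in {h : ℝ | c ≤ |h|}, ENNReal.ofReal (|h| ^ a)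
      = 2 * ENNReal.ofReal (-c ^ (a + 1) / (a + 1)) := by
  have htail : {h : ℝ | c ≤ |h|} = Iic (-c) ∪ Ici c := by
    ext h
    simp only [mem_ofPred_eq, mem_union, mem_Iic, mem_Ici, le_abs', or_comm]
  have hright :
      ∫⁻ h in Ici c, ENNReal.ofReal (|h| ^ a) = ENNReal.ofReal (-c ^ (a + 1) / (a + 1)) := by
    rw [← setLIntegral_congr Ioi_ae_eq_Ici, ← lintegral_Ioi_rpow_of_lt ha hc]
    exact setLIntegral_congr_fun measurableSet_Ioi fun h hh => by rw [abs_of_pos (hc.trans hh)]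
  have hleft :
      ∫⁻ h in Iic (-c), ENNReal.ofReal (|h| ^ a) = ∫⁻ h in Ici c, ENNReal.ofReal (|h| ^ a) := by
    rw [← (measurePreserving_neg volume).setLIntegral_comp_preimage_emb
      (MeasurableEquiv.neg ℝ).measurableEmbedding]
    simp only [neg_preimage, neg_Iic, neg_neg, abs_neg]
  rw [htail, lintegral_union measurableSet_Ici (Iic_disjoint_Ici.2 (by linarith)), hleft, hright,
    two_mul]

theorem rpow_setLIntegral_comp_add_mul_le {f K : ℝ → ℝ≥0∞} (hf : AEMeasurable f)
    (hK : AEMeasurable K) {a b p : ℝ} (hsupp : ∀ᵐ y, y ∉ Icc a b → f y = 0) (hp : 1 < p)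
    (S : Set ℝ) (x : ℝ) :
    (∫⁻ h in S, f (x + h) * K h) ^ p
      ≤ ENNReal.ofReal (b - a) ^ (p - 1) * ∫⁻ h in S, f (x + h) ^ p * K h ^ p := by
  have hshift := (measurePreserving_add_left volume x).quasiMeasurePreserving
  have hvanish : ∀ᵐ h ∂volume.restrict S, h ∉ Icc (a - x) (b - x) → f (x + h) * K h = 0 := by
    refine ae_restrict_of_ae ((hshift.tendsto_ae.eventually hsupp).mono fun h hh hmem => ?_)
    rw [hh fun hxh => hmem ⟨by linarith [hxh.1], by linarith [hxh.2]⟩, zero_mul]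
  calc (∫⁻ h in S, f (x + h) * K h) ^ p
      ≤ volume.restrict S (Icc (a - x) (b - x)) ^ (p - 1) * ∫⁻ h in S, (f (x + h) * K h) ^ p :=
        rpow_lintegral_le_measure_mul_of_ae_eq_zero measurableSet_Icc
          ((hf.comp_quasiMeasurePreserving hshift).mul hK).restrict hvanish hp
    _ ≤ volume (Icc (a - x) (b - x)) ^ (p - 1) * ∫⁻ h in S, (f (x + h) * K h) ^ p := by
      gcongr
      exact restrict_le_self
    _ = ENNReal.ofReal (b - a) ^ (p - 1) * ∫⁻ h in S, f (x + h) ^ p * K h ^ p := by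
      simp_rw [Real.volume_Icc, sub_sub_sub_cancel_right,
        ENNReal.mul_rpow_of_nonneg _ _ (by linarith : (0 : ℝ) ≤ p)]

/-- Tail estimate for the nonlocal operator `D_t`: if `f ∈ L^p(ℝ)`
vanishes a.e. outside `[a,b]`, `a' < a ≤ b < b'` and `c = min(a−a', b'−b)`, then
`∫_{ℝ∖[a',b']} (∫_{|h|≥c} |f(x+h)| |h|^{−1−t} dh)^p dx
  ≤ (2/(p+pt−1)) (b−a)^{p−1} c^{1−p−pt} ‖f‖_p^p`. -/
theorem stmt15 (p t : ℝ) (hp : 1 < p) (ht : 0 < t)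
    (a b a' b' : ℝ) (ha : a' < a) (hab : a ≤ b) (hb : b < b')
    (c : ℝ) (hc : c = min (a - a') (b' - b))
    (f : ℝ → ℝ) (hf : MemLp f (ENNReal.ofReal p) volume)
    (hsupp : ∀ᵐ x ∂volume, x ∉ Set.Icc a b → f x = 0) :
    (∫⁻ x in (Set.Icc a' b')ᶜ,
        (∫⁻ h in {h : ℝ | c ≤ |h|},
            ENNReal.ofReal (|f (x + h)| * |h| ^ (-(1 + t)))) ^ p)
      ≤ ENNReal.ofReal (2 / (p + p * t - 1) * (b - a) ^ (p - 1) * c ^ (1 - p - p * t)) *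
        ∫⁻ x : ℝ, ENNReal.ofReal |f x| ^ p := by
  have hc0 : 0 < c := hc ▸ lt_min (sub_pos.2 ha) (sub_pos.2 hb)
  have hp0 : 0 ≤ p := by linarith
  have hs : 1 < p + p * t := by nlinarith
  set S := {h : ℝ | c ≤ |h|}
  have hfm : AEMeasurable fun y => ENNReal.ofReal |f y| := hf.1.aemeasurable.abs.ennreal_ofReal
  have hfsupp : ∀ᵐ y, y ∉ Icc a b → ENNReal.ofReal |f y| = 0 :=
    hsupp.mono fun y hy hy' => by simp [hy hy']
  have hweight (r : ℝ) : AEMeasurable fun h : ℝ => ENNReal.ofReal (|h| ^ r) :=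
    (continuous_abs.measurable.pow_const r).ennreal_ofReal.aemeasurable
  have hweight_rpow (h : ℝ) :
      ENNReal.ofReal (|h| ^ (-(1 + t))) ^ p = ENNReal.ofReal (|h| ^ (-(p + p * t))) := by
    rw [ENNReal.ofReal_rpow_of_nonneg (by positivity) hp0, ← Real.rpow_mul (abs_nonneg h)]
    ring_nf
  calc _ ≤ ∫⁻ x,
          (∫⁻ h in S, ENNReal.ofReal |f (x + h)| * ENNReal.ofReal (|h| ^ (-(1 + t)))) ^ p := by
        simp_rw [ENNReal.ofReal_mul (abs_nonneg _)]
        exact setLIntegral_le_lintegral _ _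
    _ ≤ ∫⁻ x, ENNReal.ofReal (b - a) ^ (p - 1) *
          ∫⁻ h in S, ENNReal.ofReal |f (x + h)| ^ p * ENNReal.ofReal (|h| ^ (-(p + p * t))) :=
        lintegral_mono fun x =>
          (rpow_setLIntegral_comp_add_mul_le hfm (hweight _) hfsupp hp S x).trans_eq
            (by simp_rw [hweight_rpow])
    _ = ENNReal.ofReal (b - a) ^ (p - 1) * ((∫⁻ h in S, ENNReal.ofReal (|h| ^ (-(p + p * t)))) *
          ∫⁻ x, ENNReal.ofReal |f x| ^ p) := by
        rw [lintegral_const_mul' _ _ (by finiteness),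
          lintegral_lintegral_comp_add_mul (hfm.pow_const p) (hweight _).restrict]
    _ = _ := by
        rw [setLIntegral_abs_rpow_tail (by linarith) hc0, ← mul_assoc,
          ENNReal.ofReal_rpow_of_nonneg (sub_nonneg.2 hab) (by linarith),
          ← ENNReal.ofReal_ofNat 2, ← ENNReal.ofReal_mul (by positivity),
          ← ENNReal.ofReal_mul (by positivity)]
        congr 2
        rw [show -(p + p * t) + 1 = 1 - p - p * t by ring,
          show 1 - p - p * t = -(p + p * t - 1) by ring, neg_div_neg_eq]
        ring
end

section
/- Let p > 1 and 0 < t < 1/p. There exists a constant C, depending only on p and t, such that for every interval J ⊆ [0,1] of positive length, the function D(x) := ∫_ℝ (1_J(x+y) − 1_J(x)) |y|^{−1−t} dy is defined by an absolutely convergent integral for every x not an endpoint of J, and ‖1_J‖_{L^p(ℝ)} + ‖D‖_{L^p(ℝ)} ≤ C (length of J)^{1/p − t}. -/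
/-!
Translating and dilating `J = [u, v]` onto `[0, 1]` gives
`D_J x = |J|^{-t} D_{[0,1]} ((x - u) / |J|)`, hence `‖D_J‖_p = |J|^{1/p - t} ‖D_{[0,1]}‖_p`,
and it remains to see that `D_{[0,1]} ∈ L^p`. If `δ` is the distance from `x` to the endpoints,
then `1_J (x + y) = 1_J x` for `|y| < δ`, so
`|D_J x| ≤ ∫_{|y| ≥ δ} |y|^{-1-t} dy = (2/t) δ^{-t}`;
off `J` moreover `|D_J x| ≤ |J| δ^{-1-t}`. Thus `|D_{[0,1]}|` is dominated by
`min (δ^{-t}, δ^{-1-t})`, which is in `L^p` because `tp < 1 < (1 + t) p`.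
-/

open MeasureTheory
open scoped ENNReal

/-- The `L^p` norm, as an `ℝ≥0∞`-valued quantity. -/
noncomputable def Np (p : ℝ) (f : ℝ → ℝ) : ℝ≥0∞ :=
  (∫⁻ x : ℝ, ENNReal.ofReal |f x| ^ p) ^ (1 / p)

open Set Real

noncomputable def nonlocalDeriv (t : ℝ) (f : ℝ → ℝ) (x : ℝ) : ℝ :=
  ∫ y, (f (x + y) - f x) * |y| ^ (-(1 + t))

lemma nonlocalDeriv_comp_affine (t : ℝ) (f : ℝ → ℝ) {a : ℝ} (ha : 0 < a) (b x : ℝ) :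
    nonlocalDeriv t (fun x => f ((x - b) / a)) x = a ^ (-t) * nonlocalDeriv t f ((x - b) / a) := by
  have hscale : ∀ z : ℝ, (f ((x + a * z - b) / a) - f ((x - b) / a)) * |a * z| ^ (-(1 + t))
      = a ^ (-(1 + t)) * ((f ((x - b) / a + z) - f ((x - b) / a)) * |z| ^ (-(1 + t))) := by
    intro z
    rw [abs_mul, abs_of_pos ha, mul_rpow ha.le (abs_nonneg z),
      show (x + a * z - b) / a = (x - b) / a + z by field_simp; ring]
    ring
  unfold nonlocalDeriv
  calc ∫ y, (f ((x + y - b) / a) - f ((x - b) / a)) * |y| ^ (-(1 + t))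
      = a * ∫ z, (f ((x + a * z - b) / a) - f ((x - b) / a)) * |a * z| ^ (-(1 + t)) := by
        rw [Measure.integral_comp_mul_left
            (fun y => (f ((x + y - b) / a) - f ((x - b) / a)) * |y| ^ (-(1 + t))) a,
          abs_of_pos (inv_pos.mpr ha), smul_eq_mul, mul_inv_cancel_left₀ ha.ne']
    _ = a * a ^ (-(1 + t)) *
          ∫ z, (f ((x - b) / a + z) - f ((x - b) / a)) * |z| ^ (-(1 + t)) := by
        simp only [hscale, integral_const_mul, mul_assoc]
    _ = a ^ (-t) * ∫ z, (f ((x - b) / a + z) - f ((x - b) / a)) * |z| ^ (-(1 + t)) := by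
        rw [mul_comm a, ← rpow_add_one ha.ne', show -(1 + t) + 1 = -t by ring]

lemma indicator_Icc_eq_comp_affine {u v : ℝ} (huv : u < v) :
    (Icc u v).indicator (fun _ => (1 : ℝ))
      = fun x => (Icc 0 1).indicator (fun _ => 1) ((x - u) / (v - u)) := by
  have hl : 0 < v - u := sub_pos.mpr huv
  funext x
  have hmem : (x - u) / (v - u) ∈ Icc 0 1 ↔ x ∈ Icc u v := by
    rw [mem_Icc, mem_Icc, div_nonneg_iff, div_le_one hl]
    constructor
    · rintro ⟨⟨h1, _⟩ | ⟨_, h2⟩, h3⟩ <;> constructor <;> linarith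
    · rintro ⟨h1, h2⟩; exact ⟨Or.inl ⟨by linarith, hl.le⟩, by linarith⟩
  simp only [indicator_apply, hmem]

lemma lintegral_comp_affine (F : ℝ → ℝ≥0∞) {a : ℝ} (ha : 0 < a) (b : ℝ) :
    ∫⁻ x, F ((x - b) / a) = ENNReal.ofReal a * ∫⁻ x, F x := by
  rw [lintegral_sub_right_eq_self (fun x => F (x / a)) b]
  have e := lintegral_map_equiv (μ := volume) F
    (Homeomorph.mulLeft₀ a⁻¹ (inv_ne_zero ha.ne')).toMeasurableEquiv
  simp only [Homeomorph.toMeasurableEquiv_coe, Homeomorph.coe_mulLeft₀] at e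
  rw [Real.map_volume_mul_left (inv_ne_zero ha.ne'), lintegral_smul_measure, inv_inv,
    abs_of_pos ha] at e
  simpa [div_eq_inv_mul] using e.symm

lemma Np_const_mul {p : ℝ} (hp : 0 < p) (g : ℝ → ℝ) {c : ℝ} (hc : 0 ≤ c) :
    Np p (fun x => c * g x) = ENNReal.ofReal c * Np p g := by
  unfold Np
  simp_rw [abs_mul, abs_of_nonneg hc, ENNReal.ofReal_mul hc, ENNReal.mul_rpow_of_nonneg _ _ hp.le]
  rw [lintegral_const_mul' _ _ (by finiteness), ENNReal.mul_rpow_of_nonneg _ _ (by positivity),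
    ← ENNReal.rpow_mul, mul_one_div_cancel hp.ne', ENNReal.rpow_one]

lemma Np_comp_affine {p : ℝ} (hp : 0 < p) (g : ℝ → ℝ) {a : ℝ} (ha : 0 < a) (b : ℝ) :
    Np p (fun x => g ((x - b) / a)) = ENNReal.ofReal (a ^ (1 / p)) * Np p g := by
  unfold Np
  rw [lintegral_comp_affine (fun x => ENNReal.ofReal |g x| ^ p) ha,
    ENNReal.mul_rpow_of_nonneg _ _ (by positivity), ENNReal.ofReal_rpow_of_pos ha]

lemma Np_indicator_Icc {p : ℝ} (hp : 0 < p) {u v : ℝ} (huv : u ≤ v) :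
    Np p ((Icc u v).indicator fun _ => 1) = ENNReal.ofReal ((v - u) ^ (1 / p)) := by
  have hpow : ∀ x, ENNReal.ofReal |(Icc u v).indicator (fun _ => (1 : ℝ)) x| ^ p
      = (Icc u v).indicator 1 x := by
    intro x
    by_cases hx : x ∈ Icc u v <;> simp [hx, ENNReal.zero_rpow_of_pos hp]
  unfold Np
  rw [funext hpow, lintegral_indicator_one measurableSet_Icc, Real.volume_Icc,
    ENNReal.ofReal_rpow_of_nonneg (sub_nonneg.mpr huv) (by positivity)]

lemma integrable_comp_abs {f : ℝ → ℝ} (hf : IntegrableOn f (Ioi 0)) :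
    Integrable (fun x => f |x|) := by
  have hpos : IntegrableOn (fun x => f |x|) (Ioi 0) :=
    hf.congr_fun (fun x hx => by rw [abs_of_pos hx]) measurableSet_Ioi
  have hneg : IntegrableOn (fun x => f |x|) (Iic 0) := by
    have hneg : MeasurableEmbedding fun x : ℝ => -x := (Homeomorph.neg ℝ).measurableEmbedding
    rw [← Measure.map_neg_eq_self (volume : Measure ℝ), hneg.integrableOn_map_iff]
    simp_rw [Function.comp_def, abs_neg, neg_preimage, neg_Iic, neg_zero]
    exact Iff.mpr integrableOn_Ici_iff_integrableOn_Ioi hpos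
  rw [← integrableOn_univ, ← Iic_union_Ioi (a := (0 : ℝ))]
  exact hneg.union hpos

lemma integrable_indicator_Ici_rpow_abs {r s : ℝ} (hr : 0 < r) (hs : s < -1) :
    Integrable (fun y => (Ici r).indicator (· ^ s) |y|) := by
  refine integrable_comp_abs ?_
  rw [IntegrableOn, integrable_indicator_iff measurableSet_Ici, IntegrableOn,
    Measure.restrict_restrict measurableSet_Ici, inter_eq_left.mpr (Ici_subset_Ioi.mpr hr)]
  exact Iff.mpr integrableOn_Ici_iff_integrableOn_Ioi (integrableOn_Ioi_rpow_of_lt hs hr)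

lemma integral_indicator_Ici_rpow_abs {r s : ℝ} (hr : 0 < r) (hs : s < -1) :
    ∫ y, (Ici r).indicator (· ^ s) |y| = -2 * r ^ (s + 1) / (s + 1) := by
  rw [integral_comp_abs, setIntegral_indicator measurableSet_Ici,
    inter_eq_right.mpr (Ici_subset_Ioi.mpr hr), integral_Ici_eq_integral_Ioi,
    integral_Ioi_rpow_of_lt hs hr]
  ring

section Pointwise

variable {t u v x : ℝ}

lemma indicator_Icc_add_eq {y : ℝ} (hy : |y| < min |x - u| |x - v|) :
    (Icc u v).indicator (fun _ => (1 : ℝ)) (x + y) = (Icc u v).indicator (fun _ => 1) x := by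
  have hu : |y| < |x - u| := hy.trans_le (min_le_left _ _)
  have hv : |y| < |x - v| := hy.trans_le (min_le_right _ _)
  have hmem : x + y ∈ Icc u v ↔ x ∈ Icc u v := by
    rw [mem_Icc, mem_Icc]
    rcases abs_cases (x - u) with ⟨h1, h1'⟩ | ⟨h1, h1'⟩ <;>
    rcases abs_cases (x - v) with ⟨h2, h2'⟩ | ⟨h2, h2'⟩ <;>
    rcases abs_cases y with ⟨h3, h3'⟩ | ⟨h3, h3'⟩ <;>
    constructor <;> rintro ⟨h4, h5⟩ <;> constructor <;> linarith
  simp only [indicator_apply, hmem]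

lemma abs_sub_indicator_Icc_mul_le (y : ℝ) :
    |((Icc u v).indicator (fun _ => (1 : ℝ)) (x + y) - (Icc u v).indicator (fun _ => 1) x) *
        |y| ^ (-(1 + t))| ≤ (Ici (min |x - u| |x - v|)).indicator (· ^ (-(1 + t))) |y| := by
  by_cases hy : min |x - u| |x - v| ≤ |y|
  · rw [indicator_of_mem (mem_Ici.mpr hy), abs_mul, abs_of_nonneg (rpow_nonneg (abs_nonneg y) _)]
    refine mul_le_of_le_one_left (rpow_nonneg (abs_nonneg y) _) ?_
    simp only [indicator_apply]
    split_ifs <;> norm_num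
  · rw [indicator_Icc_add_eq (not_le.mp hy), sub_self, zero_mul, abs_zero,
      indicator_of_notMem (fun h => hy (mem_Ici.mp h))]

lemma min_abs_sub_pos (hxu : x ≠ u) (hxv : x ≠ v) : 0 < min |x - u| |x - v| :=
  lt_min (abs_pos.mpr (sub_ne_zero.mpr hxu)) (abs_pos.mpr (sub_ne_zero.mpr hxv))

lemma integrable_sub_indicator_Icc_mul_rpow (ht : 0 < t) (hxu : x ≠ u) (hxv : x ≠ v) :
    Integrable fun y =>
      ((Icc u v).indicator (fun _ => (1 : ℝ)) (x + y) - (Icc u v).indicator (fun _ => 1) x) *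
        |y| ^ (-(1 + t)) := by
  refine (integrable_indicator_Ici_rpow_abs (min_abs_sub_pos hxu hxv) (by linarith)).mono' ?_
    (ae_of_all _ fun y => abs_sub_indicator_Icc_mul_le y)
  have hind : Measurable ((Icc u v).indicator fun _ => (1 : ℝ)) :=
    measurable_const.indicator measurableSet_Icc
  exact (((hind.comp (measurable_const_add x)).sub_const _).mul (by fun_prop)).aestronglyMeasurable

lemma abs_nonlocalDeriv_indicator_Icc_le (ht : 0 < t) (hxu : x ≠ u) (hxv : x ≠ v) :
    |nonlocalDeriv t ((Icc u v).indicator fun _ => 1) x|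
      ≤ 2 / t * min |x - u| |x - v| ^ (-t) := by
  have hδ := min_abs_sub_pos hxu hxv
  calc |nonlocalDeriv t ((Icc u v).indicator fun _ => 1) x|
      ≤ ∫ y, (Ici (min |x - u| |x - v|)).indicator (· ^ (-(1 + t))) |y| := by
        rw [← Real.norm_eq_abs, nonlocalDeriv]
        exact norm_integral_le_of_norm_le
          (integrable_indicator_Ici_rpow_abs hδ (show -(1 + t) < -1 by linarith))
          (ae_of_all _ fun y => abs_sub_indicator_Icc_mul_le y)
    _ = 2 / t * min |x - u| |x - v| ^ (-t) := by
        rw [integral_indicator_Ici_rpow_abs hδ (by linarith), show -(1 + t) + 1 = -t by ring]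
        field_simp

lemma abs_nonlocalDeriv_indicator_Icc_le_of_notMem (ht : 0 < t) (huv : u ≤ v)
    (hx : x ∉ Icc u v) :
    |nonlocalDeriv t ((Icc u v).indicator fun _ => 1) x|
      ≤ (v - u) * min |x - u| |x - v| ^ (-(1 + t)) := by
  have hδ : 0 < min |x - u| |x - v| := min_abs_sub_pos (by rintro rfl; simp_all)
    (by rintro rfl; simp_all)
  have hδy : ∀ y ∈ Icc (u - x) (v - x), min |x - u| |x - v| ≤ |y| := by
    intro y hy
    rw [mem_Icc, not_and_or, not_le, not_le] at hx
    rcases hx with h | h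
    · calc min |x - u| |x - v| ≤ |x - u| := min_le_left _ _
        _ = u - x := by rw [abs_sub_comm, abs_of_pos (sub_pos.mpr h)]
        _ ≤ |y| := by linarith [hy.1, le_abs_self y]
    · calc min |x - u| |x - v| ≤ |x - v| := min_le_right _ _
        _ = x - v := abs_of_pos (sub_pos.mpr h)
        _ ≤ |y| := by linarith [hy.2, neg_le_abs y]
  have hintegrand : (fun y => ((Icc u v).indicator (fun _ => (1 : ℝ)) (x + y) -
        (Icc u v).indicator (fun _ => 1) x) * |y| ^ (-(1 + t)))
      = (Icc (u - x) (v - x)).indicator fun y => |y| ^ (-(1 + t)) := by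
    funext y
    have hmem : y ∈ Icc (u - x) (v - x) ↔ x + y ∈ Icc u v := by
      simp only [mem_Icc]; constructor <;> rintro ⟨h1, h2⟩ <;> constructor <;> linarith
    rw [indicator_of_notMem hx, sub_zero]
    by_cases hy : x + y ∈ Icc u v
    · rw [indicator_of_mem hy, indicator_of_mem (hmem.mpr hy), one_mul]
    · rw [indicator_of_notMem hy, indicator_of_notMem (mt hmem.mp hy), zero_mul]
  rw [nonlocalDeriv, hintegrand, integral_indicator measurableSet_Icc, ← Real.norm_eq_abs]
  refine (norm_setIntegral_le_of_norm_le_const (C := min |x - u| |x - v| ^ (-(1 + t)))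
    measure_Icc_lt_top fun y hy => ?_).trans_eq ?_
  · rw [norm_of_nonneg (rpow_nonneg (abs_nonneg y) _)]
    exact rpow_le_rpow_of_nonpos hδ (hδy y hy) (by linarith)
  · rw [Real.volume_real_Icc_of_le (by linarith)]
    ring

end Pointwise

noncomputable def decayProfile (t r : ℝ) : ℝ := min (r ^ (-t)) (r ^ (-(1 + t)))

lemma decayProfile_nonneg (t : ℝ) {r : ℝ} (hr : 0 ≤ r) : 0 ≤ decayProfile t r :=
  le_min (rpow_nonneg hr _) (rpow_nonneg hr _)

lemma integrable_decayProfile_abs_rpow {t p : ℝ} (hp : 0 ≤ p) (htp : t * p < 1)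
    (htp' : 1 < (1 + t) * p) : Integrable fun x => decayProfile t |x| ^ p := by
  refine integrable_comp_abs (f := fun r => decayProfile t r ^ p) ?_
  have hmeas : AEStronglyMeasurable (fun r => decayProfile t r ^ p) :=
    (by unfold decayProfile; fun_prop : Measurable fun r => decayProfile t r ^ p)
      |>.aestronglyMeasurable
  have hbound : ∀ {s r : ℝ}, 0 < r → decayProfile t r ≤ r ^ s →
      ‖decayProfile t r ^ p‖ ≤ r ^ (s * p) := by
    intro s r hr h
    rw [norm_of_nonneg (rpow_nonneg (decayProfile_nonneg t hr.le) _), rpow_mul hr.le]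
    exact rpow_le_rpow (decayProfile_nonneg t hr.le) h hp
  rw [← Ioc_union_Ioi_eq_Ioi zero_le_one]
  refine IntegrableOn.union ?_ ?_
  · have hint : IntegrableOn (fun r : ℝ => r ^ (-t * p)) (Ioc 0 1) := by
      rw [← intervalIntegrable_iff_integrableOn_Ioc_of_le zero_le_one]
      exact intervalIntegral.intervalIntegrable_rpow' (by linarith)
    exact hint.mono' hmeas.restrict ((ae_restrict_mem measurableSet_Ioc).mono
      fun r hr => hbound hr.1 (min_le_left _ _))
  · have hint : IntegrableOn (fun r : ℝ => r ^ (-(1 + t) * p)) (Ioi 1) :=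
      integrableOn_Ioi_rpow_of_lt (by linarith) one_pos
    exact hint.mono' hmeas.restrict ((ae_restrict_mem measurableSet_Ioi).mono
      fun r hr => hbound (zero_lt_one.trans hr) (min_le_right _ _))

section UnitInterval

variable {t x : ℝ}

lemma abs_nonlocalDeriv_indicator_unitInterval_le (ht : 0 < t) (ht2 : t ≤ 2) (hx0 : x ≠ 0)
    (hx1 : x ≠ 1) :
    |nonlocalDeriv t ((Icc 0 1).indicator fun _ => 1) x|
      ≤ 2 / t * decayProfile t (min |x| |x - 1|) := by
  have hδ : 0 < min |x| |x - 1| := by simpa using min_abs_sub_pos hx0 hx1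
  have hnear := abs_nonlocalDeriv_indicator_Icc_le ht hx0 hx1
  rw [sub_zero] at hnear
  rw [decayProfile, mul_min_of_nonneg _ _ (by positivity)]
  refine le_min hnear ?_
  by_cases hx : x ∈ Icc 0 1
  · have hδ1 : min |x| |x - 1| ≤ 1 :=
      (min_le_left _ _).trans (abs_le.mpr ⟨by linarith [hx.1], hx.2⟩)
    exact hnear.trans (mul_le_mul_of_nonneg_left
      (rpow_le_rpow_of_exponent_ge hδ hδ1 (by linarith)) (by positivity))
  · have hfar := abs_nonlocalDeriv_indicator_Icc_le_of_notMem ht zero_le_one hx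
    rw [sub_zero, sub_zero, one_mul] at hfar
    exact hfar.trans (le_mul_of_one_le_left (rpow_nonneg hδ.le _) ((one_le_div ht).mpr ht2))

lemma rpow_abs_nonlocalDeriv_indicator_unitInterval_le {p : ℝ} (hp : 0 ≤ p) (ht : 0 < t)
    (ht2 : t ≤ 2) (hx0 : x ≠ 0) (hx1 : x ≠ 1) :
    |nonlocalDeriv t ((Icc 0 1).indicator fun _ => 1) x| ^ p
      ≤ (2 / t) ^ p * (decayProfile t |x| ^ p + decayProfile t |x - 1| ^ p) := by
  have hk : ∀ r, 0 ≤ decayProfile t |r| ^ p :=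
    fun r => rpow_nonneg (decayProfile_nonneg t (abs_nonneg r)) _
  calc |nonlocalDeriv t ((Icc 0 1).indicator fun _ => 1) x| ^ p
      ≤ (2 / t * decayProfile t (min |x| |x - 1|)) ^ p :=
        rpow_le_rpow (abs_nonneg _) (abs_nonlocalDeriv_indicator_unitInterval_le ht ht2 hx0 hx1) hp
    _ = (2 / t) ^ p * decayProfile t (min |x| |x - 1|) ^ p :=
        mul_rpow (by positivity) (decayProfile_nonneg t (le_min (abs_nonneg _) (abs_nonneg _)))
    _ ≤ (2 / t) ^ p * (decayProfile t |x| ^ p + decayProfile t |x - 1| ^ p) := by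
        gcongr
        rcases min_cases |x| |x - 1| with ⟨h, _⟩ | ⟨h, _⟩ <;> rw [h]
        · exact le_add_of_nonneg_right (hk _)
        · exact le_add_of_nonneg_left (hk _)

lemma Np_nonlocalDeriv_indicator_unitInterval_lt_top {p : ℝ} (hp : 1 < p) (ht : 0 < t)
    (htp : t < 1 / p) : Np p (nonlocalDeriv t ((Icc 0 1).indicator fun _ => 1)) < ⊤ := by
  have hp0 : 0 < p := by linarith
  have htp1 : t * p < 1 := by rwa [lt_div_iff₀ hp0] at htp
  have hk := integrable_decayProfile_abs_rpow hp0.le htp1 (by nlinarith)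
  have hG : Integrable fun x =>
      (2 / t) ^ p * (decayProfile t |x| ^ p + decayProfile t |x - 1| ^ p) :=
    (hk.add (hk.comp_sub_right 1)).const_mul _
  refine ENNReal.rpow_lt_top_of_nonneg (by positivity) (ne_of_lt ?_)
  refine (lintegral_mono_ae ?_).trans_lt hG.lintegral_lt_top
  filter_upwards [Measure.ae_ne volume 0, Measure.ae_ne volume 1] with x hx0 hx1
  rw [ENNReal.ofReal_rpow_of_nonneg (abs_nonneg _) hp0.le]
  exact ENNReal.ofReal_le_ofReal
    (rpow_abs_nonlocalDeriv_indicator_unitInterval_le hp0.le ht (by nlinarith) hx0 hx1)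

end UnitInterval

/-- For `p > 1` and `0 < t < 1/p` there is a constant `C = C(p,t)`
such that for every interval `J = [u,v] ⊆ [0,1]` of positive length, the function
`D(x) = ∫ (1_J(x+y) − 1_J(x)) |y|^{−1−t} dy` is given by an absolutely convergent
integral at every non-endpoint `x`, and `‖1_J‖_p + ‖D‖_p ≤ C (v−u)^{1/p − t}`. -/
theorem stmt17 (p t : ℝ) (hp : 1 < p) (ht0 : 0 < t) (htp : t < 1 / p) :
    ∃ C : ℝ, 0 < C ∧ ∀ u v : ℝ, u < v → 0 ≤ u → v ≤ 1 →
      (∀ x : ℝ, x ≠ u → x ≠ v →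
        Integrable (fun y : ℝ =>
          ((Set.Icc u v).indicator (fun _ => (1 : ℝ)) (x + y) -
            (Set.Icc u v).indicator (fun _ => (1 : ℝ)) x) * |y| ^ (-(1 + t))) volume) ∧
      Np p ((Set.Icc u v).indicator fun _ => (1 : ℝ)) +
          Np p (fun x : ℝ => ∫ y : ℝ,
            ((Set.Icc u v).indicator (fun _ => (1 : ℝ)) (x + y) -
              (Set.Icc u v).indicator (fun _ => (1 : ℝ)) x) * |y| ^ (-(1 + t)))
        ≤ ENNReal.ofReal (C * (v - u) ^ (1 / p - t)) := by
  have hp0 : 0 < p := by linarith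
  set N := Np p (nonlocalDeriv t ((Icc 0 1).indicator fun _ => 1))
  have hN : N ≠ ⊤ := (Np_nonlocalDeriv_indicator_unitInterval_lt_top hp ht0 htp).ne
  refine ⟨1 + N.toReal, by positivity, fun u v huv hu hv => ⟨fun x hxu hxv =>
    integrable_sub_indicator_Icc_mul_rpow ht0 hxu hxv, ?_⟩⟩
  have hl : 0 < v - u := sub_pos.mpr huv
  have hD : nonlocalDeriv t ((Icc u v).indicator fun _ => 1) = fun x =>
      (v - u) ^ (-t) * nonlocalDeriv t ((Icc 0 1).indicator fun _ => 1) ((x - u) / (v - u)) := by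
    funext x
    rw [indicator_Icc_eq_comp_affine huv, nonlocalDeriv_comp_affine t _ hl]
  have hexp : (v - u) ^ (-t) * (v - u) ^ (1 / p) = (v - u) ^ (1 / p - t) := by
    rw [← rpow_add hl]; ring_nf
  have hle : (v - u) ^ (1 / p) ≤ (v - u) ^ (1 / p - t) :=
    rpow_le_rpow_of_exponent_ge hl (by linarith) (by linarith)
  have hsum : Np p ((Icc u v).indicator fun _ => 1) +
      Np p (nonlocalDeriv t ((Icc u v).indicator fun _ => 1))
      = ENNReal.ofReal ((v - u) ^ (1 / p) + (v - u) ^ (1 / p - t) * N.toReal) := by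
    rw [Np_indicator_Icc hp0 huv.le, hD, Np_const_mul hp0 _ (rpow_nonneg hl.le _),
      Np_comp_affine hp0 _ hl, ← mul_assoc, ← ENNReal.ofReal_mul (rpow_nonneg hl.le _), hexp,
      ENNReal.ofReal_add (rpow_nonneg hl.le _) (by positivity),
      ENNReal.ofReal_mul (rpow_nonneg hl.le _), ENNReal.ofReal_toReal hN]
  exact hsum.trans_le <| ENNReal.ofReal_le_ofReal (by nlinarith [ENNReal.toReal_nonneg (a := N)])
end

section
/- Let I = [0,1], let I_1, …, I_N be pairwise disjoint open subintervals of I whose union is I up to a Lebesgue-null set, and let T: I → I be a map whose restriction to each I_i extends to a C¹ diffeomorphism of the closure of I_i onto its image with inf_{I_i} |T′| > 0. Let ξ_i := (T|_{I_i})^{−1} and define the transfer operator (L f)(x) := ∑_{i=1}^{N} 1_{T(I_i)}(x) f(ξ_i(x)) |ξ_i′(x)|. Suppose every point of [0,1] belongs to at most M of the closures of the images T(I_1), …, T(I_N). Then for every 1 ≤ p < ∞ and every f ∈ L^p(I, Lebesgue), ‖L f‖_{L^p} ≤ M^{1−1/p} (sup_{x} |T′(x)|^{−1})^{1−1/p}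 ‖f‖_{L^p}, where the supremum is over the union of the intervals I_i. -/
/-! Write `L f = ∑ᵢ Lᵢ f`, where `Lᵢ f = 1_{T(Iᵢ)} · (f ∘ ξᵢ) |ξᵢ'|` is the contribution of the
`i`-th branch. At every point at most `M` of the `Lᵢ f` are nonzero, so the power-mean inequality
gives `|L f|^p ≤ M^{p-1} ∑ᵢ |Lᵢ f|^p`. The substitution `y = T x` turns `∫ |Lᵢ f|^p` into
`∫_{Iᵢ} |f|^p |T'|^{1-p} ≤ s^{p-1} ∫_{Iᵢ} |f|^p`, and the `Iᵢ` are disjoint. -/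

open MeasureTheory
open scoped ENNReal
open Set Filter Topology Function

theorem ENNReal.rpow_sum_le_of_ncard_ne_zero_le {ι : Type*} [Fintype ι] (z : ι → ℝ≥0∞) {M : ℕ}
    (hM : {i | z i ≠ 0}.ncard ≤ M) {p : ℝ} (hp : 1 ≤ p) :
    (∑ i, z i) ^ p ≤ (M : ℝ≥0∞) ^ (p - 1) * ∑ i, z i ^ p := by
  classical
  set S := Finset.univ.filter fun i => z i ≠ 0
  have hS : S.card ≤ M := by
    rw [← Set.ncard_coe_finset]
    simpa [S] using hM
  calc (∑ i, z i) ^ p = (∑ i ∈ S, z i) ^ p := by rw [Finset.sum_filter_ne_zero]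
    _ ≤ (S.card : ℝ≥0∞) ^ (p - 1) * ∑ i ∈ S, z i ^ p :=
      ENNReal.rpow_sum_le_const_mul_sum_rpow S z hp
    _ ≤ (M : ℝ≥0∞) ^ (p - 1) * ∑ i, z i ^ p := by
      gcongr
      exact S.subset_univ

theorem ENNReal.ofReal_mul_mul_ofReal_inv_rpow_le {t s p : ℝ} (ht : 0 < t) (hts : t⁻¹ ≤ s)
    (hp : 1 ≤ p) (u : ℝ≥0∞) :
    ENNReal.ofReal t * (u * ENNReal.ofReal t⁻¹) ^ p ≤ ENNReal.ofReal s ^ (p - 1) * u ^ p := by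
  set v := ENNReal.ofReal t⁻¹
  have hv0 : v ≠ 0 := by simpa [v] using ht
  have hvp : v ^ p = v ^ (p - 1) * v := by
    conv_lhs => rw [← sub_add_cancel p 1, ENNReal.rpow_add _ _ hv0 ENNReal.ofReal_ne_top,
      ENNReal.rpow_one]
  have hcancel : ENNReal.ofReal t * v = 1 := by
    rw [← ENNReal.ofReal_mul ht.le, mul_inv_cancel₀ ht.ne', ENNReal.ofReal_one]
  calc ENNReal.ofReal t * (u * v) ^ p = (ENNReal.ofReal t * v) * (v ^ (p - 1) * u ^ p) := by
        rw [ENNReal.mul_rpow_of_nonneg _ _ (by linarith), hvp]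
        ring
    _ ≤ ENNReal.ofReal s ^ (p - 1) * u ^ p := by
      rw [hcancel, one_mul]
      gcongr
      exact ENNReal.ofReal_le_ofReal hts

theorem eLpNorm_le_mul_of_lintegral_rpow_le {α E F : Type*} [MeasurableSpace α] {μ : Measure α}
    [NormedAddCommGroup E] [NormedAddCommGroup F] {f : α → E} {g : α → F} {p : ℝ} {c : ℝ≥0∞}
    (hp : 0 < p) (h : ∫⁻ x, ‖g x‖ₑ ^ p ∂μ ≤ c ^ p * ∫⁻ x, ‖f x‖ₑ ^ p ∂μ) :
    eLpNorm g (ENNReal.ofReal p) μ ≤ c * eLpNorm f (ENNReal.ofReal p) μ := by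
  have hp0 : ENNReal.ofReal p ≠ 0 := by simpa using hp
  rw [eLpNorm_eq_lintegral_rpow_enorm_toReal hp0 ENNReal.ofReal_ne_top,
    eLpNorm_eq_lintegral_rpow_enorm_toReal hp0 ENNReal.ofReal_ne_top, ENNReal.toReal_ofReal hp.le]
  calc (∫⁻ x, ‖g x‖ₑ ^ p ∂μ) ^ (1 / p) ≤ (c ^ p * ∫⁻ x, ‖f x‖ₑ ^ p ∂μ) ^ (1 / p) := by gcongr
    _ = c * (∫⁻ x, ‖f x‖ₑ ^ p ∂μ) ^ (1 / p) := by
      rw [ENNReal.mul_rpow_of_nonneg _ _ (by positivity), ← ENNReal.rpow_mul,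
        mul_one_div_cancel hp.ne', ENNReal.rpow_one]

theorem HasDerivWithinAt.mul_eq_one_of_leftInverse {f g : ℝ → ℝ} {f' g' x : ℝ} {s t : Set ℝ}
    (hg : HasDerivWithinAt g g' t (f x)) (hf : HasDerivWithinAt f f' s x) (hst : MapsTo f s t)
    (hs : s ∈ 𝓝 x) (hinv : ∀ᶠ y in 𝓝 x, g (f y) = y) : g' * f' = 1 :=
  (((hg.comp x hf hst).hasDerivAt hs).congr_of_eventuallyEq
    (hinv.mono fun _ hy => hy.symm)).unique (hasDerivAt_id x)

noncomputable def branchTransfer (I : Set ℝ) (T ξ ξ' : ℝ → ℝ) (g : ℝ → ℝ) : ℝ → ℝ :=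
  (T '' I).indicator fun y => g (ξ y) * |ξ' y|

structure IsInverseBranch (I : Set ℝ) (T T' ξ ξ' : ℝ → ℝ) : Prop where
  measurableSet : MeasurableSet I
  hasDerivWithinAt : ∀ x ∈ I, HasDerivWithinAt T (T' x) I x
  leftInvOn : LeftInvOn ξ T I
  continuousOn : ContinuousOn ξ (T '' I)
  inv_deriv_mul_deriv : ∀ x ∈ I, ξ' (T x) * T' x = 1

theorem isInverseBranch_Ioo {a b : ℝ} {T T' ξ ξ' : ℝ → ℝ}
    (hT : ∀ x ∈ Ioo a b, HasDerivWithinAt T (T' x) (Icc a b) x) (hξ : LeftInvOn ξ T (Ioo a b))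
    (hξ' : ∀ y ∈ T '' Ioo a b, HasDerivWithinAt ξ (ξ' y) (T '' Icc a b) y) :
    IsInverseBranch (Ioo a b) T T' ξ ξ' where
  measurableSet := measurableSet_Ioo
  hasDerivWithinAt x hx := (hT x hx).mono Ioo_subset_Icc_self
  leftInvOn := hξ
  continuousOn y hy := (hξ' y hy).continuousWithinAt.mono (image_mono Ioo_subset_Icc_self)
  inv_deriv_mul_deriv x hx :=
    (hξ' _ (mem_image_of_mem T hx)).mul_eq_one_of_leftInverse (hT x hx) (mapsTo_image T _)
      (Icc_mem_nhds hx.1 hx.2) (eventually_of_mem (Ioo_mem_nhds hx.1 hx.2) hξ)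

namespace IsInverseBranch

variable {I : Set ℝ} {T T' ξ ξ' : ℝ → ℝ}

theorem injOn (h : IsInverseBranch I T T' ξ ξ') : InjOn T I :=
  h.leftInvOn.injOn

theorem deriv_ne_zero (h : IsInverseBranch I T T' ξ ξ') {x : ℝ} (hx : x ∈ I) : T' x ≠ 0 :=
  right_ne_zero_of_mul_eq_one (h.inv_deriv_mul_deriv x hx)

theorem inv_deriv_eq (h : IsInverseBranch I T T' ξ ξ') {y : ℝ} (hy : y ∈ T '' I) :
    ξ' y = (T' (ξ y))⁻¹ := by
  obtain ⟨x, hx, rfl⟩ := hy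
  rw [h.leftInvOn hx]
  exact eq_inv_of_mul_eq_one_left (h.inv_deriv_mul_deriv x hx)

theorem measurableSet_image (h : IsInverseBranch I T T' ξ ξ') : MeasurableSet (T '' I) :=
  measurable_image_of_fderivWithin h.measurableSet
    (fun x hx => (h.hasDerivWithinAt x hx).hasFDerivWithinAt) h.injOn

theorem aemeasurable_deriv (h : IsInverseBranch I T T' ξ ξ') :
    AEMeasurable T' (volume.restrict I) := by
  have := aemeasurable_fderivWithin volume h.measurableSet
    (fun x hx => (h.hasDerivWithinAt x hx).hasFDerivWithinAt)
  simpa [Function.comp_def] using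
    (ContinuousLinearMap.apply ℝ ℝ (1 : ℝ)).measurable.comp_aemeasurable this

theorem aemeasurable_inv (h : IsInverseBranch I T T' ξ ξ') :
    AEMeasurable ξ (volume.restrict (T '' I)) :=
  h.continuousOn.aemeasurable h.measurableSet_image

/-- `T` maps null sets to null sets, so `ξ` pulls them back to null sets. -/
theorem map_restrict_image_absolutelyContinuous (h : IsInverseBranch I T T' ξ ξ') :
    (volume.restrict (T '' I)).map ξ ≪ volume.restrict I := by
  refine Measure.AbsolutelyContinuous.mk fun E hE hE0 => ?_
  rw [Measure.restrict_apply hE] at hE0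
  rw [Measure.map_apply_of_aemeasurable h.aemeasurable_inv hE,
    Measure.restrict_apply' h.measurableSet_image]
  have hdiff : DifferentiableOn ℝ T (E ∩ I) := fun x hx =>
    (h.hasDerivWithinAt x hx.2).differentiableWithinAt.mono inter_subset_right
  refine measure_mono_null ?_
    (addHaar_image_eq_zero_of_differentiableOn_of_addHaar_eq_zero volume hdiff hE0)
  rintro _ ⟨hyE, x, hx, rfl⟩
  refine ⟨x, ⟨?_, hx⟩, rfl⟩
  rwa [mem_preimage, h.leftInvOn hx] at hyE

theorem aemeasurable_comp (h : IsInverseBranch I T T' ξ ξ') {g : ℝ → ℝ}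
    (hg : AEMeasurable g (volume.restrict I)) :
    AEMeasurable (fun y => g (ξ y)) (volume.restrict (T '' I)) :=
  (hg.mono_ac h.map_restrict_image_absolutelyContinuous).comp_aemeasurable h.aemeasurable_inv

theorem aemeasurable_branchTransfer (h : IsInverseBranch I T T' ξ ξ') {g : ℝ → ℝ}
    (hg : AEMeasurable g (volume.restrict I)) : AEMeasurable (branchTransfer I T ξ ξ' g) := by
  refine (aemeasurable_indicator_iff h.measurableSet_image).2 ((h.aemeasurable_comp hg).mul ?_)
  refine (h.aemeasurable_comp h.aemeasurable_deriv).inv.abs.congr ?_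
  filter_upwards [self_mem_ae_restrict h.measurableSet_image] with y hy
  rw [h.inv_deriv_eq hy]
  rfl

theorem lintegral_enorm_branchTransfer_rpow_le (h : IsInverseBranch I T T' ξ ξ') {s p : ℝ}
    (hs : ∀ x ∈ I, |T' x|⁻¹ ≤ s) (hp : 1 ≤ p) (g : ℝ → ℝ) :
    ∫⁻ y, ‖branchTransfer I T ξ ξ' g y‖ₑ ^ p
      ≤ ENNReal.ofReal s ^ (p - 1) * ∫⁻ x in I, ‖g x‖ₑ ^ p := by
  have hind : (fun y => ‖branchTransfer I T ξ ξ' g y‖ₑ ^ p)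
      = (T '' I).indicator fun y => (‖g (ξ y)‖ₑ * ENNReal.ofReal |ξ' y|) ^ p := by
    funext y
    by_cases hy : y ∈ T '' I
    · simp [branchTransfer, hy, enorm_mul, Real.enorm_eq_ofReal_abs]
    · simp [branchTransfer, hy, ENNReal.zero_rpow_of_pos (by linarith : (0 : ℝ) < p)]
  calc ∫⁻ y, ‖branchTransfer I T ξ ξ' g y‖ₑ ^ p
      = ∫⁻ x in I, ENNReal.ofReal |T' x| * (‖g x‖ₑ * ENNReal.ofReal |T' x|⁻¹) ^ p := by
        rw [hind, lintegral_indicator h.measurableSet_image,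
          lintegral_image_eq_lintegral_abs_deriv_mul h.measurableSet h.hasDerivWithinAt h.injOn]
        refine setLIntegral_congr_fun h.measurableSet fun x hx => ?_
        rw [h.inv_deriv_eq (mem_image_of_mem T hx), h.leftInvOn hx, abs_inv]
    _ ≤ ∫⁻ x in I, ENNReal.ofReal s ^ (p - 1) * ‖g x‖ₑ ^ p :=
        setLIntegral_mono' h.measurableSet fun x hx =>
          ENNReal.ofReal_mul_mul_ofReal_inv_rpow_le (abs_pos.2 (h.deriv_ne_zero hx)) (hs x hx) hp _
    _ = ENNReal.ofReal s ^ (p - 1) * ∫⁻ x in I, ‖g x‖ₑ ^ p :=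
        lintegral_const_mul' _ _ (ENNReal.rpow_ne_top_of_nonneg (by linarith) ENNReal.ofReal_ne_top)

end IsInverseBranch

theorem lintegral_enorm_sum_branchTransfer_rpow_le {ι : Type*} [Fintype ι] {K : Set ℝ}
    {I : ι → Set ℝ} {T T' : ℝ → ℝ} {ξ ξ' : ι → ℝ → ℝ} {M : ℕ} {s p : ℝ} {g : ℝ → ℝ}
    (hI : ∀ i, IsInverseBranch (I i) T T' (ξ i) (ξ' i)) (hdisj : Pairwise (Disjoint on I))
    (hIK : ∀ i, I i ⊆ K) (hM : ∀ y, {i | y ∈ T '' I i}.ncard ≤ M)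
    (hs : ∀ i, ∀ x ∈ I i, |T' x|⁻¹ ≤ s) (hp : 1 ≤ p) (hg : AEMeasurable g (volume.restrict K)) :
    ∫⁻ y, ‖∑ i, branchTransfer (I i) T (ξ i) (ξ' i) g y‖ₑ ^ p
      ≤ ((M : ℝ≥0∞) * ENNReal.ofReal s) ^ (p - 1) * ∫⁻ x in K, ‖g x‖ₑ ^ p := by
  set B := fun i => branchTransfer (I i) T (ξ i) (ξ' i) g
  have hpt : ∀ y, ‖∑ i, B i y‖ₑ ^ p ≤ (M : ℝ≥0∞) ^ (p - 1) * ∑ i, ‖B i y‖ₑ ^ p := by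
    intro y
    refine (ENNReal.rpow_le_rpow (enorm_sum_le _ _) (by linarith)).trans
      (ENNReal.rpow_sum_le_of_ncard_ne_zero_le _ ((ncard_le_ncard ?_ (toFinite _)).trans (hM y)) hp)
    exact fun i hi =>
      mem_of_indicator_ne_zero (f := fun y => g (ξ i y) * |ξ' i y|) (enorm_ne_zero.1 hi)
  have hBmeas : ∀ i, AEMeasurable fun y => ‖B i y‖ₑ ^ p := fun i =>
    ((hI i).aemeasurable_branchTransfer
      (hg.mono_measure (Measure.restrict_mono (hIK i) le_rfl))).enorm.pow_const p
  calc ∫⁻ y, ‖∑ i, B i y‖ₑ ^ p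
      ≤ ∫⁻ y, (M : ℝ≥0∞) ^ (p - 1) * ∑ i, ‖B i y‖ₑ ^ p := lintegral_mono hpt
    _ = (M : ℝ≥0∞) ^ (p - 1) * ∑ i, ∫⁻ y, ‖B i y‖ₑ ^ p := by
      rw [lintegral_const_mul' _ _
          (ENNReal.rpow_ne_top_of_nonneg (by linarith) (ENNReal.natCast_ne_top M)),
        lintegral_finsetSum' _ fun i _ => hBmeas i]
    _ ≤ (M : ℝ≥0∞) ^ (p - 1) * ∑ i, ENNReal.ofReal s ^ (p - 1) * ∫⁻ x in I i, ‖g x‖ₑ ^ p := by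
      gcongr with i
      exact (hI i).lintegral_enorm_branchTransfer_rpow_le (hs i) hp g
    _ = ((M : ℝ≥0∞) * ENNReal.ofReal s) ^ (p - 1) * ∫⁻ x in ⋃ i, I i, ‖g x‖ₑ ^ p := by
      rw [← Finset.mul_sum, lintegral_iUnion (fun i => (hI i).measurableSet) hdisj, tsum_fintype,
        ENNReal.mul_rpow_of_nonneg _ _ (by linarith), mul_assoc]
    _ ≤ ((M : ℝ≥0∞) * ENNReal.ofReal s) ^ (p - 1) * ∫⁻ x in K, ‖g x‖ₑ ^ p := by
      gcongr
      exact iUnion_subset hIK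

theorem stmt18_general (N : ℕ) (hN : 0 < N) (a b : Fin N → ℝ)
    (hab : ∀ i, a i < b i) (ha0 : ∀ i, 0 ≤ a i) (hb1 : ∀ i, b i ≤ 1)
    (hdisj : ∀ i j, i ≠ j → Disjoint (Set.Ioo (a i) (b i)) (Set.Ioo (a j) (b j)))
    (T T' : ℝ → ℝ)
    (hderiv : ∀ i, ∀ x ∈ Set.Icc (a i) (b i),
      HasDerivWithinAt T (T' x) (Set.Icc (a i) (b i)) x)
    (ξ ξ' : Fin N → ℝ → ℝ)
    (hξ : ∀ i, ∀ x ∈ Set.Icc (a i) (b i), ξ i (T x) = x)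
    (hξd : ∀ i, ∀ y ∈ T '' Set.Ioo (a i) (b i),
      HasDerivWithinAt (ξ i) (ξ' i y) (T '' Set.Icc (a i) (b i)) y)
    (L : (ℝ → ℝ) → ℝ → ℝ)
    (hL : L = fun f x =>
      ∑ i, (T '' Set.Ioo (a i) (b i)).indicator (fun y => f (ξ i y) * |ξ' i y|) x)
    (M : ℕ)
    (hM : ∀ x : ℝ, Set.ncard {i : Fin N | x ∈ closure (T '' Set.Ioo (a i) (b i))} ≤ M)
    (p : ℝ) (hp : 1 ≤ p)
    (f : ℝ → ℝ)
    (hf : MemLp f (ENNReal.ofReal p) (volume.restrict (Set.Icc (0 : ℝ) 1)))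
    (s : ℝ) (hs : ∀ i, ∀ x ∈ Set.Ioo (a i) (b i), |T' x|⁻¹ ≤ s) :
    eLpNorm (L f) (ENNReal.ofReal p) (volume.restrict (Set.Icc (0 : ℝ) 1))
      ≤ ENNReal.ofReal ((M : ℝ) ^ (1 - 1 / p) * s ^ (1 - 1 / p)) *
        eLpNorm f (ENNReal.ofReal p) (volume.restrict (Set.Icc (0 : ℝ) 1)) := by
  have hs0 : 0 ≤ s := by
    obtain ⟨x, hx⟩ := nonempty_Ioo.2 (hab ⟨0, hN⟩)
    exact (inv_nonneg.2 (abs_nonneg _)).trans (hs _ x hx)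
  have hconst : ENNReal.ofReal ((M : ℝ) ^ (1 - 1 / p) * s ^ (1 - 1 / p)) ^ p
      = ((M : ℝ≥0∞) * ENNReal.ofReal s) ^ (p - 1) := by
    have hMs : 0 ≤ (M : ℝ) * s := mul_nonneg M.cast_nonneg hs0
    have hexp : (1 - 1 / p) * p = p - 1 := by field_simp
    rw [← Real.mul_rpow M.cast_nonneg hs0,
      ENNReal.ofReal_rpow_of_nonneg (by positivity) (by linarith), ← Real.rpow_mul hMs, hexp, ← ENNReal.ofReal_rpow_of_nonneg hMs (by linarith),
      ENNReal.ofReal_mul M.cast_nonneg, ENNReal.ofReal_natCast]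
  have hbranch : ∀ i, IsInverseBranch (Ioo (a i) (b i)) T T' (ξ i) (ξ' i) := fun i =>
    isInverseBranch_Ioo (fun x hx => hderiv i x (Ioo_subset_Icc_self hx))
      (fun x hx => hξ i x (Ioo_subset_Icc_self hx)) (hξd i)
  have hsub : ∀ i, Ioo (a i) (b i) ⊆ Icc 0 1 := fun i =>
    Ioo_subset_Icc_self.trans (Icc_subset_Icc (ha0 i) (hb1 i))
  have hmult : ∀ y, {i | y ∈ T '' Ioo (a i) (b i)}.ncard ≤ M := fun y =>
    (ncard_le_ncard (ofPred_subset_ofPred.2 fun _ hi => subset_closure hi) (toFinite _)).trans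
      (hM y)
  subst hL
  refine eLpNorm_le_mul_of_lintegral_rpow_le (by linarith) ?_
  rw [hconst]
  exact (setLIntegral_le_lintegral _ _).trans <| lintegral_enorm_sum_branchTransfer_rpow_le
    hbranch (fun i j hij => hdisj i j hij) hsub hmult hs hp hf.aestronglyMeasurable.aemeasurable

/-- `L^p` bound for the Perron–Frobenius (transfer) operator of a
finite-branched piecewise `C¹` expanding map `T` of `I = [0,1]`: if every point lies in
at most `M` of the closures of the images of the branches, then for `1 ≤ p < ∞` and any
upper bound `s` for `|T'|⁻¹` on the branches,
`‖L f‖_{L^p} ≤ M^{1−1/p} s^{1−1/p} ‖f‖_{L^p}`. -/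
theorem stmt18 (N : ℕ) (hN : 0 < N) (a b : Fin N → ℝ)
    (hab : ∀ i, a i < b i) (ha0 : ∀ i, 0 ≤ a i) (hb1 : ∀ i, b i ≤ 1)
    (hdisj : ∀ i j, i ≠ j → Disjoint (Set.Ioo (a i) (b i)) (Set.Ioo (a j) (b j)))
    (hcover : volume (Set.Icc (0 : ℝ) 1 \ ⋃ i, Set.Ioo (a i) (b i)) = 0)
    (T T' : ℝ → ℝ)
    (hmaps : ∀ x ∈ Set.Icc (0 : ℝ) 1, T x ∈ Set.Icc (0 : ℝ) 1)
    (hderiv : ∀ i, ∀ x ∈ Set.Icc (a i) (b i),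
      HasDerivWithinAt T (T' x) (Set.Icc (a i) (b i)) x)
    (hTcont : ∀ i, ContinuousOn T' (Set.Icc (a i) (b i)))
    (hinj : ∀ i, Set.InjOn T (Set.Icc (a i) (b i)))
    (hlow : ∀ i, ∃ m : ℝ, 0 < m ∧ ∀ x ∈ Set.Icc (a i) (b i), m ≤ |T' x|)
    (ξ ξ' : Fin N → ℝ → ℝ)
    (hξ : ∀ i, ∀ x ∈ Set.Icc (a i) (b i), ξ i (T x) = x)
    (hξT : ∀ i, ∀ y ∈ T '' Set.Ioo (a i) (b i), T (ξ i y) = y)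
    (hξd : ∀ i, ∀ y ∈ T '' Set.Ioo (a i) (b i),
      HasDerivWithinAt (ξ i) (ξ' i y) (T '' Set.Icc (a i) (b i)) y)
    (L : (ℝ → ℝ) → ℝ → ℝ)
    (hL : L = fun f x =>
      ∑ i, (T '' Set.Ioo (a i) (b i)).indicator (fun y => f (ξ i y) * |ξ' i y|) x)
    (M : ℕ)
    (hM : ∀ x : ℝ, Set.ncard {i : Fin N | x ∈ closure (T '' Set.Ioo (a i) (b i))} ≤ M)
    (p : ℝ) (hp : 1 ≤ p)
    (f : ℝ → ℝ)
    (hf : MemLp f (ENNReal.ofReal p) (volume.restrict (Set.Icc (0 : ℝ) 1)))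
    (s : ℝ) (hs : ∀ i, ∀ x ∈ Set.Ioo (a i) (b i), |T' x|⁻¹ ≤ s) :
    eLpNorm (L f) (ENNReal.ofReal p) (volume.restrict (Set.Icc (0 : ℝ) 1))
      ≤ ENNReal.ofReal ((M : ℝ) ^ (1 - 1 / p) * s ^ (1 - 1 / p)) *
        eLpNorm f (ENNReal.ofReal p) (volume.restrict (Set.Icc (0 : ℝ) 1)) :=
  stmt18_general N hN a b hab ha0 hb1 hdisj T T' hderiv ξ ξ' hξ hξd L hL M hM p hp f hf s hs
end
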